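/- arXiv:2002.01885 — 2 statements merged into one kernel-verified Lean document; each statement's English description precedes it below -/
import Mathlib

section
/- Let F ∈ ℂ[x,y,z] be a nonzero homogeneous polynomial, P ∈ ℙ²(ℂ) a point with m = mult_P(F), and L a line through P. Then multE_{P,L}(F) ≤ mult_P(F), i.e. the multiplicity of the strict transform of the curve {F = 0} at any point of the exceptional divisor of the blow-up at P is at most the multiplicity of the curve at P. -/
open MvPolynomial

noncomputable section

/-- The complex projective plane `ℙ²(ℂ)`. -/
abbrev P2 : Type := Projectivization ℂ (Fin 3 → ℂ)

/-- Iterated partial derivative of `F` with multi-index `ν`. -/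
def pd (ν : Fin 3 → ℕ) (F : MvPolynomial (Fin 3) ℂ) : MvPolynomial (Fin 3) ℂ :=
  (fun G => pderiv (0 : Fin 3) G)^[ν 0] <|
    (fun G => pderiv (1 : Fin 3) G)^[ν 1] <|
      (fun G => pderiv (2 : Fin 3) G)^[ν 2] F

/-- `multP F P`: the multiplicity (order of vanishing) of `F` at the projective
point `P`, i.e. the least total order `m` of a partial derivative of `F`
not vanishing at (a representative of) `P`. -/
def multP (F : MvPolynomial (Fin 3) ℂ) (P : P2) : ℕ :=
  sInf {m | ∃ ν : Fin 3 → ℕ, ν 0 + ν 1 + ν 2 = m ∧ eval P.rep (pd ν F) ≠ 0}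

/-- A line in `P2`, encoded as a 2-dimensional linear subspace of `ℂ³`. -/
structure ProjLine : Type where
  carrier : Submodule ℂ (Fin 3 → ℂ)
  dim2 : Module.finrank ℂ carrier = 2

/-- The point `P` lies on the line `L`. -/
def memLine (P : P2) (L : ProjLine) : Prop := P.rep ∈ L.carrier

/-- Three points of `P2` are collinear. -/
def collin (A B C : P2) : Prop :=
  ∃ L : ProjLine, memLine A L ∧ memLine B L ∧ memLine C L

/-- Order of vanishing at the origin of a polynomial in two variables:
the least total degree of a monomial appearing in `h`. -/
def ord2 (h : MvPolynomial (Fin 2) ℂ) : ℕ :=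
  sInf {d | ∃ ν ∈ h.support, ν 0 + ν 1 = d}

/-- The dehomogenization of `F` in the affine coordinates `(u, v) ↦ [p + u•e1 + v•e2]`
centered at `[p]`. -/
def affPoly (p e1 e2 : Fin 3 → ℂ) (F : MvPolynomial (Fin 3) ℂ) :
    MvPolynomial (Fin 2) ℂ :=
  aeval (fun i => C (p i) + C (e1 i) * X 0 + C (e2 i) * X 1) F

/-- The blow-up substitution `(u, v) ↦ (u, u·v)`. -/
def blowSub (h : MvPolynomial (Fin 2) ℂ) : MvPolynomial (Fin 2) ℂ :=
  aeval (fun i : Fin 2 => if i = 0 then X 0 else X 0 * X 1) h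

/-- `multE F P L`: the multiplicity of the strict transform of the curve `{F = 0}`
at the point of the exceptional divisor of the blow-up at `P` determined by the
direction of the line `L` through `P`.  In affine coordinates `(u,v)` centered
at `P` with `L = {v = 0}`, the dehomogenization `f` of `F` satisfies
`f(u, u·v) = u^m · g(u,v)` with `m = mult_P F`, and `multE F P L = mult₀ g`;
equivalently `ord₀ (f(u, u·v)) = ord₀ f + multE F P L`. -/
def multE (F : MvPolynomial (Fin 3) ℂ) (P : P2) (L : ProjLine) : ℕ :=
  sInf {s | ∃ e1 e2 : Fin 3 → ℂ, e1 ∈ L.carrier ∧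
    LinearIndependent ℂ ![P.rep, e1, e2] ∧
    ord2 (blowSub (affPoly P.rep e1 e2 F)) = ord2 (affPoly P.rep e1 e2 F) + s}

/-- A fat-point datum `Z = (Z0, Λ)` on the del Pezzo surface `S_r`: a finite set
`Z0` of points of `ℙ²` away from the blown-up points `P_1, …, P_r` (points of
`S_r` off the exceptional divisors), and a finite set `Lam` of pairs `(i, L)`
with `L` a line through `P_i` (points of `S_r` on the exceptional divisors),
not both empty. -/
structure FatDatum (r : ℕ) (Ppts : Fin r → P2) : Type where
  Z0 : Finset P2
  Lam : Finset (Fin r × ProjLine)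
  Z0_off : ∀ Q ∈ Z0, ∀ i, Q ≠ Ppts i
  lam_through : ∀ pr ∈ Lam, memLine (Ppts pr.1) pr.2
  nonemp : Z0.Nonempty ∨ Lam.Nonempty

/-- The initial degree `α(mZ)` of the fat-point scheme `mZ` on `S_r` with respect
to the anticanonical bundle `−K = 3H − E_1 − ⋯ − E_r`: the least `k ≥ 1` such
that some nonzero homogeneous `F` of degree `3k` has multiplicity `≥ k` at each
`P_i`, multiplicity `≥ m` at each point of `Z0`, and
`(mult_{P_i} F − k) + multE_{P_i, L} F ≥ m` for each `(i, L) ∈ Lam`. -/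
def alphaDP {r : ℕ} {Ppts : Fin r → P2} (Z : FatDatum r Ppts) (m : ℕ) : ℕ :=
  sInf {k | 1 ≤ k ∧ ∃ F : MvPolynomial (Fin 3) ℂ, F ≠ 0 ∧
    F.IsHomogeneous (3 * k) ∧
    (∀ i, k ≤ multP F (Ppts i)) ∧
    (∀ Q ∈ Z.Z0, m ≤ multP F Q) ∧
    (∀ pr ∈ Z.Lam, m ≤ (multP F (Ppts pr.1) - k) + multE F (Ppts pr.1) pr.2)}

/-- No three of the given points are collinear. -/
def noThreeCollinear {r : ℕ} (Ppts : Fin r → P2) : Prop :=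
  ∀ i j k : Fin r, i ≠ j → i ≠ k → j ≠ k →
    ¬ collin (Ppts i) (Ppts j) (Ppts k)

/-- No six of the given points lie on a conic. -/
def noSixOnConic {r : ℕ} (Ppts : Fin r → P2) : Prop :=
  ∀ s : Finset (Fin r), s.card = 6 →
    ∀ G : MvPolynomial (Fin 3) ℂ, G ≠ 0 → G.IsHomogeneous 2 →
      ¬ ∀ i ∈ s, eval (Ppts i).rep G = 0

/-- The line `L` is tangent to the conic `{G = 0}` at `P`: it passes through `P`
and meets the conic with intersection multiplicity `≥ 2` there (the restriction
of `G` to `L` vanishes to order `≥ 2` at `P`). -/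
def tangentAt (G : MvPolynomial (Fin 3) ℂ) (L : ProjLine) (P : P2) : Prop :=
  memLine P L ∧ eval P.rep G = 0 ∧
    ∀ w ∈ L.carrier, eval P.rep (∑ i : Fin 3, C (w i) * pderiv i G) = 0

/-- The initial degree `α(mZ)` of a fat-point scheme `mZ` in `ℙ²(ℂ)`: the least
degree `d` of a nonzero homogeneous polynomial of degree `d` vanishing to order
at least `m` at every point of `Z`. -/
def alphaPl (Z : Finset P2) (m : ℕ) : ℕ :=
  sInf {d | ∃ F : MvPolynomial (Fin 3) ℂ, F ≠ 0 ∧ F.IsHomogeneous d ∧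
    ∀ P ∈ Z, m ≤ multP F P}

/-! ### Auxiliary lemmas for the proof of `multE_le_multP` -/

section Aux

/-- Coefficient of a partial derivative. -/
lemma coeff_pderiv_aux (i : Fin 3) (h : MvPolynomial (Fin 3) ℂ) (κ : Fin 3 →₀ ℕ) :
    coeff κ (pderiv i h) = ((κ i : ℂ) + 1) * coeff (κ + Finsupp.single i 1) h := by
  induction h using MvPolynomial.induction_on' with
  | monomial u a =>
    rw [pderiv_monomial, coeff_monomial, coeff_monomial]
    by_cases h0 : u i = 0
    · have hu : u - Finsupp.single i 1 = u := by
        ext j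
        rw [Finsupp.tsub_apply, Finsupp.single_apply]
        rcases eq_or_ne i j with rfl | hij
        · simp [h0]
        · simp [hij]
      have hne : u ≠ κ + Finsupp.single i 1 := by
        intro h
        have := congrArg (fun s => s i) h
        simp [Finsupp.single_apply] at this
        omega
      rw [hu, if_neg hne]
      split_ifs with h1
      · simp [h0]
      · ring
    · have key : (u - Finsupp.single i 1 = κ) ↔ (u = κ + Finsupp.single i 1) := by
        constructor
        · rintro rfl
          ext j
          simp only [Finsupp.add_apply, Finsupp.tsub_apply, Finsupp.single_apply]
          rcases eq_or_ne i j with rfl | hij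
          · simp; omega
          · simp [hij]
        · rintro rfl
          ext j
          simp only [Finsupp.add_apply, Finsupp.tsub_apply, Finsupp.single_apply]
          omega
      simp only [key]
      split_ifs with hcond
      · have : u i = κ i + 1 := by rw [hcond]; simp
        rw [this]; push_cast; ring
      · ring
  | add p q hp hq =>
    simp only [map_add, coeff_add, hp, hq]; ring

lemma coeff_pderiv_iterate_aux (i : Fin 3) (k : ℕ) (h : MvPolynomial (Fin 3) ℂ)
    (κ : Fin 3 →₀ ℕ) :
    ∃ c : ℂ, c ≠ 0 ∧
      coeff κ ((fun G => pderiv i G)^[k] h) = c * coeff (κ + Finsupp.single i k) h := by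
  induction k generalizing κ with
  | zero => exact ⟨1, one_ne_zero, by simp⟩
  | succ k ih =>
    rw [Function.iterate_succ_apply']
    obtain ⟨c, hc, hco⟩ := ih (κ + Finsupp.single i 1)
    refine ⟨((κ i : ℂ) + 1) * c, mul_ne_zero ?_ hc, ?_⟩
    · have : ((κ i : ℂ) + 1) = ((κ i + 1 : ℕ) : ℂ) := by push_cast; ring
      rw [this]
      exact Nat.cast_ne_zero.mpr (by omega)
    · have hidx : κ + Finsupp.single i 1 + Finsupp.single i k = κ + Finsupp.single i (k + 1) := by
        ext j
        simp only [Finsupp.add_apply, Finsupp.single_apply]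
        split_ifs <;> omega
      rw [coeff_pderiv_aux, hco, hidx, mul_assoc]

lemma pd_coeff_eval_zero_aux (ν : Fin 3 → ℕ) (G : MvPolynomial (Fin 3) ℂ) :
    ∃ c : ℂ, c ≠ 0 ∧ eval (0 : Fin 3 → ℂ) (pd ν G) =
      c * coeff (Finsupp.single 0 (ν 0) + Finsupp.single 1 (ν 1) + Finsupp.single 2 (ν 2)) G := by
  have h0 : eval (0 : Fin 3 → ℂ) (pd ν G) = coeff 0 (pd ν G) := by
    rw [eval_zero]; rfl
  obtain ⟨c0, hc0, h1⟩ := coeff_pderiv_iterate_aux 0 (ν 0)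
    ((fun G => pderiv (1 : Fin 3) G)^[ν 1] ((fun G => pderiv (2 : Fin 3) G)^[ν 2] G)) 0
  obtain ⟨c1, hc1, h2⟩ := coeff_pderiv_iterate_aux 1 (ν 1)
    ((fun G => pderiv (2 : Fin 3) G)^[ν 2] G) (0 + Finsupp.single 0 (ν 0))
  obtain ⟨c2, hc2, h3⟩ := coeff_pderiv_iterate_aux 2 (ν 2) G
    (0 + Finsupp.single 0 (ν 0) + Finsupp.single 1 (ν 1))
  refine ⟨c0 * c1 * c2, by simp [hc0, hc1, hc2], ?_⟩
  rw [h0]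
  show coeff 0 ((fun G => pderiv (0:Fin 3) G)^[ν 0] _) = _
  rw [h1, h2, h3, zero_add]
  ring

/-- The translation substitution. -/
def shiftF (p : Fin 3 → ℂ) : Fin 3 → MvPolynomial (Fin 3) ℂ := fun j => C (p j) + X j

lemma pderiv_aeval_shift_aux (p : Fin 3 → ℂ) (i : Fin 3) (F : MvPolynomial (Fin 3) ℂ) :
    pderiv i (aeval (shiftF p) F) = aeval (shiftF p) (pderiv i F) := by
  induction F using MvPolynomial.induction_on with
  | C a => simp
  | add p q hp hq => simp only [map_add, hp, hq]
  | mul_X q n ih =>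
    classical
    rw [map_mul, aeval_X, pderiv_mul, ih, pderiv_mul, map_add, map_mul, map_mul, aeval_X]
    by_cases hin : i = n <;>
      simp [hin, pderiv_X, Pi.single_apply, shiftF]

lemma iterate_pderiv_aeval_shift_aux (p : Fin 3 → ℂ) (i : Fin 3) (k : ℕ)
    (F : MvPolynomial (Fin 3) ℂ) :
    (fun G => pderiv i G)^[k] (aeval (shiftF p) F)
      = aeval (shiftF p) ((fun G => pderiv i G)^[k] F) := by
  induction k generalizing F with
  | zero => rfl
  | succ k ih =>
    rw [Function.iterate_succ_apply, Function.iterate_succ_apply]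
    show (fun G => pderiv i G)^[k] (pderiv i (aeval (shiftF p) F)) = _
    rw [pderiv_aeval_shift_aux p i F]
    exact ih (pderiv i F)

lemma pd_aeval_shift_aux (p : Fin 3 → ℂ) (ν : Fin 3 → ℕ) (F : MvPolynomial (Fin 3) ℂ) :
    pd ν (aeval (shiftF p) F) = aeval (shiftF p) (pd ν F) := by
  unfold pd
  rw [iterate_pderiv_aeval_shift_aux, iterate_pderiv_aeval_shift_aux,
    iterate_pderiv_aeval_shift_aux]

lemma eval_zero_aeval_shift_aux (p : Fin 3 → ℂ) (q : MvPolynomial (Fin 3) ℂ) :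
    eval (0 : Fin 3 → ℂ) (aeval (shiftF p) q) = eval p q := by
  induction q using MvPolynomial.induction_on with
  | C a => simp
  | add f g hf hg => simp only [map_add, hf, hg]
  | mul_X f n ih =>
    simp only [map_mul, aeval_X, eval_X, ih]
    congr 1
    simp [shiftF]

/-- Taylor-type formula: the value of an iterated partial derivative at `p` is a nonzero
multiple of the corresponding coefficient of the translated polynomial. -/
lemma eval_pd_eq_aux (p : Fin 3 → ℂ) (F : MvPolynomial (Fin 3) ℂ) (ν : Fin 3 → ℕ) :
    ∃ c : ℂ, c ≠ 0 ∧ eval p (pd ν F) =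
      c * coeff (Finsupp.single 0 (ν 0) + Finsupp.single 1 (ν 1) + Finsupp.single 2 (ν 2))
        (aeval (shiftF p) F) := by
  obtain ⟨c, hc, h⟩ := pd_coeff_eval_zero_aux ν (aeval (shiftF p) F)
  exact ⟨c, hc, by rw [← eval_zero_aeval_shift_aux p (pd ν F), ← pd_aeval_shift_aux, h]⟩

lemma fs3_eq_aux (d : Fin 3 →₀ ℕ) :
    Finsupp.single 0 (d 0) + Finsupp.single 1 (d 1) + Finsupp.single 2 (d 2) = d := by
  ext j
  fin_cases j <;> simp [Finsupp.single_apply]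

lemma deg3_aux (d : Fin 3 →₀ ℕ) : d.degree = d 0 + d 1 + d 2 := by
  rw [Finsupp.degree_apply, Finset.sum_subset (Finset.subset_univ _)
    (fun x _ hx => Finsupp.notMem_support_iff.mp hx)]
  exact Fin.sum_univ_three _

lemma deg2_aux (d : Fin 2 →₀ ℕ) : d.degree = d 0 + d 1 := by
  rw [Finsupp.degree_apply, Finset.sum_subset (Finset.subset_univ _)
    (fun x _ hx => Finsupp.notMem_support_iff.mp hx)]
  exact Fin.sum_univ_two _

/-- The exponent transformation of the blow-up substitution. -/
def twist (σ : Fin 2 →₀ ℕ) : Fin 2 →₀ ℕ :=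
  Finsupp.single 0 (σ 0 + σ 1) + Finsupp.single 1 (σ 1)

lemma twist_apply0 (σ : Fin 2 →₀ ℕ) : twist σ 0 = σ 0 + σ 1 := by
  simp [twist, Finsupp.single_apply]

lemma twist_apply1 (σ : Fin 2 →₀ ℕ) : twist σ 1 = σ 1 := by
  simp [twist, Finsupp.single_apply]

lemma blowSub_monomial_aux (σ : Fin 2 →₀ ℕ) (c : ℂ) :
    blowSub (monomial σ c) = monomial (twist σ) c := by
  unfold blowSub
  rw [aeval_monomial, Finsupp.prod_fintype _ _ (fun i => pow_zero _), Fin.prod_univ_two]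
  rw [monomial_eq, Finsupp.prod_fintype _ _ (fun i => pow_zero _), Fin.prod_univ_two]
  rw [twist_apply0, twist_apply1]
  rw [show (if (0 : Fin 2) = 0 then (X 0 : MvPolynomial (Fin 2) ℂ) else X 0 * X 1) = X 0 by
    simp]
  rw [show (if (1 : Fin 2) = 0 then (X 0 : MvPolynomial (Fin 2) ℂ) else X 0 * X 1) = X 0 * X 1 by
    norm_num]
  rw [algebraMap_eq]
  ring

lemma blowSub_eq_sum_aux (q : MvPolynomial (Fin 2) ℂ) :
    blowSub q = ∑ σ ∈ q.support, monomial (twist σ) (coeff σ q) := by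
  conv_lhs => rw [q.as_sum]
  unfold blowSub
  rw [map_sum]
  exact Finset.sum_congr rfl fun σ _ => blowSub_monomial_aux σ _

lemma twist_inj_aux : Function.Injective twist := by
  intro a b h
  have h0 := congrArg (fun s => s 0) h
  have h1 := congrArg (fun s => s 1) h
  simp only [twist_apply0, twist_apply1] at h0 h1
  have e0 : a 0 = b 0 := by omega
  have e1 : a 1 = b 1 := by omega
  ext j
  fin_cases j
  · exact e0
  · exact e1

lemma coeff_blowSub_aux (q : MvPolynomial (Fin 2) ℂ) (σ : Fin 2 →₀ ℕ) :
    coeff (twist σ) (blowSub q) = coeff σ q := by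
  classical
  rw [blowSub_eq_sum_aux, coeff_sum]
  simp only [coeff_monomial, twist_inj_aux.eq_iff]
  rw [Finset.sum_ite_eq' q.support σ (fun σ' => coeff σ' q)]
  split_ifs with h
  · rfl
  · exact (Finsupp.notMem_support_iff.mp h).symm

lemma blowSub_support_aux (q : MvPolynomial (Fin 2) ℂ) (τ : Fin 2 →₀ ℕ)
    (h : coeff τ (blowSub q) ≠ 0) : ∃ σ ∈ q.support, τ = twist σ := by
  rw [blowSub_eq_sum_aux, coeff_sum] at h
  obtain ⟨σ, hσ, hne⟩ := Finset.exists_ne_zero_of_sum_ne_zero h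
  refine ⟨σ, hσ, ?_⟩
  rw [coeff_monomial] at hne
  rcases eq_or_ne (twist σ) τ with h' | h'
  · exact h'.symm
  · simp [h'] at hne

lemma coeff_proj_aux (q : MvPolynomial (Fin 2) ℂ) (m : ℕ) :
    coeff (Finsupp.single 1 m)
      (aeval (fun j : Fin 2 => if j = 0 then 0 else (X 1 : MvPolynomial (Fin 2) ℂ)) q)
      = coeff (Finsupp.single 1 m) q := by
  induction q using MvPolynomial.induction_on' with
  | monomial u a =>
    rw [aeval_monomial, Finsupp.prod_fintype _ _ (fun i => pow_zero _), Fin.prod_univ_two]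
    rw [show (if (0 : Fin 2) = 0 then (0 : MvPolynomial (Fin 2) ℂ) else X 1) = 0 by simp]
    rw [show (if (1 : Fin 2) = 0 then (0 : MvPolynomial (Fin 2) ℂ) else X 1) = X 1 by norm_num]
    by_cases h0 : u 0 = 0
    · rw [h0, pow_zero, one_mul, algebraMap_eq, C_mul_X_pow_eq_monomial, coeff_monomial,
        coeff_monomial]
      have hiff : (Finsupp.single (1 : Fin 2) (u 1) = Finsupp.single 1 m) ↔
          (u = Finsupp.single 1 m) := by
        constructor
        · intro h
          have hum : u 1 = m := Finsupp.single_injective 1 h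
          ext j
          fin_cases j <;> simp [Finsupp.single_apply, h0, hum]
        · intro h
          rw [h]
          simp
      rw [if_congr hiff rfl rfl]
    · have hne : u ≠ Finsupp.single 1 m := by
        intro h
        apply h0
        rw [h]
        simp [Finsupp.single_apply]
      rw [zero_pow h0, coeff_monomial, if_neg hne]
      simp
  | add q1 q2 hq1 hq2 => simp only [map_add, coeff_add, hq1, hq2]

end Aux

/-- for a nonzero `F`, a point `P` and a line `L` through `P`,
the multiplicity of the strict transform of `{F = 0}` at the point of the
exceptional divisor of the blow-up at `P` determined by `L` is at most the
multiplicity of `{F = 0}` at `P`: `multE_{P,L}(F) ≤ mult_P(F)`. -/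
theorem multE_le_multP (F : MvPolynomial (Fin 3) ℂ) (hF0 : F ≠ 0) (P : P2)
    (L : ProjLine) (hPL : memLine P L) :
    multE F P L ≤ multP F P := by
  classical
  obtain ⟨e1, he1L, he1p⟩ : ∃ e1 ∈ L.carrier, e1 ∉ Submodule.span ℂ {P.rep} := by
    by_contra hcon
    push_neg at hcon
    have h1 : Module.finrank ℂ L.carrier ≤ Module.finrank ℂ (Submodule.span ℂ {P.rep}) :=
      Submodule.finrank_mono hcon
    rw [finrank_span_singleton P.rep_nonzero, L.dim2] at h1
    omega
  have hp0 : P.rep ≠ 0 := P.rep_nonzero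
  have he10 : e1 ≠ 0 := fun h => he1p (h ▸ Submodule.zero_mem _)
  have hpair : LinearIndependent ℂ ![P.rep, e1] := by
    rw [linearIndependent_fin2]
    refine ⟨by simpa using he10, fun a ha => ?_⟩
    simp only [Matrix.cons_val_one, Matrix.head_cons, Matrix.cons_val_zero] at ha
    rcases eq_or_ne a 0 with rfl | ha0
    · rw [zero_smul] at ha; exact hp0 ha.symm
    · exact he1p (Submodule.mem_span_singleton.mpr
        ⟨a⁻¹, by rw [← ha, smul_smul, inv_mul_cancel₀ ha0, one_smul]⟩)
  set G : MvPolynomial (Fin 3) ℂ := aeval (shiftF P.rep) F with hGdef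
  have hG0 : G ≠ 0 := by
    intro h
    apply hF0
    have hcomp := MvPolynomial.comp_aeval_apply
      (aeval (fun j : Fin 3 => (X j : MvPolynomial (Fin 3) ℂ) - C (P.rep j)))
      (f := shiftF P.rep) F
    rw [← hGdef, h, map_zero] at hcomp
    have hfun : (fun i : Fin 3 => aeval
        (fun j : Fin 3 => (X j : MvPolynomial (Fin 3) ℂ) - C (P.rep j)) (shiftF P.rep i)) = X := by
      funext i
      simp [shiftF]
    rw [hfun, aeval_X_left_apply] at hcomp
    exact hcomp.symm
  set μ := multP F P with hμdef
  have hSne : {m | ∃ ν : Fin 3 → ℕ, ν 0 + ν 1 + ν 2 = m ∧ eval P.rep (pd ν F) ≠ 0}.Nonempty := by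
    obtain ⟨d, hd⟩ := MvPolynomial.ne_zero_iff.mp hG0
    obtain ⟨c, hc, he⟩ := eval_pd_eq_aux P.rep F ⇑d
    refine ⟨d 0 + d 1 + d 2, ⇑d, rfl, ?_⟩
    rw [he, fs3_eq_aux]
    exact mul_ne_zero hc hd
  have hlow : ∀ d : Fin 3 →₀ ℕ, d.degree < μ → coeff d G = 0 := by
    intro d hd
    by_contra hne
    obtain ⟨c, hc, he⟩ := eval_pd_eq_aux P.rep F ⇑d
    have hmem : (d 0 + d 1 + d 2) ∈
        {m | ∃ ν : Fin 3 → ℕ, ν 0 + ν 1 + ν 2 = m ∧ eval P.rep (pd ν F) ≠ 0} :=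
      ⟨⇑d, rfl, by rw [he, fs3_eq_aux]; exact mul_ne_zero hc hne⟩
    have hle : μ ≤ d 0 + d 1 + d 2 := Nat.sInf_le hmem
    rw [deg3_aux] at hd
    omega
  obtain ⟨ν, hνsum, hνne⟩ : ∃ ν : Fin 3 → ℕ, ν 0 + ν 1 + ν 2 = μ ∧ eval P.rep (pd ν F) ≠ 0 := by
    exact Nat.sInf_mem hSne
  obtain ⟨c, hc, he⟩ := eval_pd_eq_aux P.rep F ν
  set D : Fin 3 →₀ ℕ :=
    Finsupp.single 0 (ν 0) + Finsupp.single 1 (ν 1) + Finsupp.single 2 (ν 2) with hDdef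
  have hD : coeff D G ≠ 0 := by
    intro h
    apply hνne
    rw [he]
    rw [show coeff (Finsupp.single 0 (ν 0) + Finsupp.single 1 (ν 1) + Finsupp.single 2 (ν 2))
      (aeval (shiftF P.rep) F) = coeff D G from rfl, h, mul_zero]
  have hDd : D.degree = μ := by
    rw [deg3_aux]
    have h0 : D 0 = ν 0 := by simp [hDdef, Finsupp.add_apply, Finsupp.single_apply]
    have h1 : D 1 = ν 1 := by simp [hDdef, Finsupp.add_apply, Finsupp.single_apply]
    have h2 : D 2 = ν 2 := by simp [hDdef, Finsupp.add_apply, Finsupp.single_apply]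
    rw [h0, h1, h2]
    exact hνsum
  set H := homogeneousComponent μ G with hHdef
  have hHc : ∀ d2 : Fin 3 →₀ ℕ, coeff d2 H = if d2.degree = μ then coeff d2 G else 0 := by
    intro d2
    rw [hHdef]
    exact coeff_homogeneousComponent _ _ _
  have hHne : H ≠ 0 := by
    intro h
    have hcD := hHc D
    rw [h, coeff_zero, if_pos hDd] at hcD
    exact hD hcD.symm
  set W := Submodule.span ℂ (Set.range ![P.rep, e1]) with hWdef
  have hWne : W ≠ ⊤ := by
    intro h
    have h2 : (Set.range ![P.rep, e1]).toFinset.card ≤ 2 := by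
      rw [Set.toFinset_range]
      exact Finset.card_image_le.trans (by simp)
    have h1 := (finrank_span_le_card (R := ℂ) (Set.range ![P.rep, e1])).trans h2
    rw [← hWdef, h, finrank_top] at h1
    have h3 : Module.finrank ℂ (Fin 3 → ℂ) = 3 := by simp
    omega
  obtain ⟨x, hx⟩ : ∃ x, x ∉ W := by
    by_contra h
    push_neg at h
    exact hWne (Submodule.eq_top_iff'.mpr h)
  have hxq : (Submodule.Quotient.mk x : (Fin 3 → ℂ) ⧸ W) ≠ 0 := by
    rwa [ne_eq, Submodule.Quotient.mk_eq_zero]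
  obtain ⟨φq, hφq⟩ : ∃ φq : Module.Dual ℂ ((Fin 3 → ℂ) ⧸ W),
      φq (Submodule.Quotient.mk x) ≠ 0 := by
    by_contra h
    push_neg at h
    exact hxq ((Module.forall_dual_apply_eq_zero_iff ℂ _).mp h)
  set g : (Fin 3 → ℂ) →ₗ[ℂ] ℂ := φq.comp W.mkQ with hgdef
  have hgW : ∀ v ∈ W, g v = 0 := by
    intro v hv
    simp [hgdef, Submodule.mkQ_apply, (Submodule.Quotient.mk_eq_zero W).mpr hv]
  have hgx : g x ≠ 0 := by simpa [hgdef] using hφq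
  set ψp : MvPolynomial (Fin 3) ℂ :=
    ∑ i : Fin 3, C (g fun j => if i = j then 1 else 0) * X i with hψdef
  have hψeval : ∀ v : Fin 3 → ℂ, eval v ψp = g v := by
    intro v
    conv_rhs => rw [pi_eq_sum_univ v, map_sum]
    rw [hψdef, map_sum]
    refine Finset.sum_congr rfl fun i _ => ?_
    rw [map_mul, eval_C, eval_X, map_smul]
    simp [mul_comm]
  have hψ0 : ψp ≠ 0 := fun h => hgx (by rw [← hψeval x, h, map_zero])
  obtain ⟨w, hwH, hwg⟩ : ∃ w : Fin 3 → ℂ, eval w H ≠ 0 ∧ g w ≠ 0 := by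
    have hprod : H * ψp ≠ 0 := mul_ne_zero hHne hψ0
    by_contra h
    push_neg at h
    apply hprod
    apply MvPolynomial.funext
    intro y
    rw [map_mul, map_zero]
    rcases eq_or_ne (eval y H) 0 with h1 | h1
    · rw [h1, zero_mul]
    · rw [hψeval, h y h1, mul_zero]
  have hwW : w ∉ W := fun hm => hwg (hgW w hm)
  have hsnoc : ![P.rep, e1, w] = Fin.snoc ![P.rep, e1] w := by
    funext j
    fin_cases j <;> simp [Fin.snoc] <;> rfl
  have hindep : LinearIndependent ℂ ![P.rep, e1, w] := by
    rw [hsnoc, linearIndependent_fin_snoc]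
    exact ⟨hpair, by rwa [← hWdef]⟩
  set lin : Fin 3 → MvPolynomial (Fin 2) ℂ :=
    fun i => C (e1 i) * X 0 + C (w i) * X 1 with hlindef
  have hlinhom : ∀ i, (lin i).IsHomogeneous 1 := fun i =>
    (isHomogeneous_C_mul_X (e1 i) 0).add (isHomogeneous_C_mul_X (w i) 1)
  have hfG : affPoly P.rep e1 w F = aeval lin G := by
    rw [hGdef, MvPolynomial.comp_aeval_apply]
    have hfun : (fun i : Fin 3 => (aeval lin) (shiftF P.rep i))
        = fun i : Fin 3 => C (P.rep i) + C (e1 i) * X 0 + C (w i) * X 1 := by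
      funext i
      simp only [shiftF, map_add, aeval_C, aeval_X, hlindef, algebraMap_eq]
      ring
    rw [hfun]
    rfl
  have hhom : ∀ n, (aeval lin (homogeneousComponent n G)).IsHomogeneous n := by
    intro n
    have h1 := (homogeneousComponent_isHomogeneous n G).aeval lin hlinhom
    rwa [one_mul] at h1
  have hzero : ∀ n, n < μ → homogeneousComponent n G = 0 := by
    intro n hn
    apply MvPolynomial.ext
    intro d2
    rw [coeff_homogeneousComponent, coeff_zero]
    split_ifs with hd2
    · exact hlow d2 (by rw [hd2]; exact hn)
    · rfl
  have hGsum : affPoly P.rep e1 w F =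
      ∑ n ∈ Finset.range (G.totalDegree + 1), aeval lin (homogeneousComponent n G) := by
    rw [hfG]
    conv_lhs => rw [← sum_homogeneousComponent G]
    rw [map_sum]
  have hμle : μ ≤ G.totalDegree := by
    have h1 : D ∈ G.support := MvPolynomial.mem_support_iff.mpr hD
    have h2 := MvPolynomial.le_totalDegree h1
    rwa [show (D.sum fun _ e => e) = D.degree from rfl, hDd] at h2
  have hcoef_low : ∀ d2 : Fin 2 →₀ ℕ, d2.degree < μ →
      coeff d2 (affPoly P.rep e1 w F) = 0 := by
    intro d2 hd2
    rw [hGsum, coeff_sum]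
    apply Finset.sum_eq_zero
    intro n _
    rcases lt_or_ge n μ with h | h
    · rw [hzero n h, map_zero, coeff_zero]
    · exact (hhom n).coeff_eq_zero (by omega)
  have hsddeg : (Finsupp.single (1 : Fin 2) μ).degree = μ := by
    rw [deg2_aux]
    simp [Finsupp.single_apply]
  have hcoef_top : coeff (Finsupp.single 1 μ) (affPoly P.rep e1 w F)
      = coeff (Finsupp.single 1 μ) (aeval lin H) := by
    rw [hGsum, hHdef]
    rw [coeff_sum]
    rw [Finset.sum_eq_single μ]
    · intro n _ hne
      rcases lt_or_ge n μ with h | h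
      · rw [hzero n h, map_zero, coeff_zero]
      · exact (hhom n).coeff_eq_zero (by rw [hsddeg]; omega)
    · intro hμn
      exact absurd (Finset.mem_range.mpr (by omega)) hμn
  have hkey : coeff (Finsupp.single 1 μ) (aeval lin H) = eval w H := by
    conv_lhs => rw [H.as_sum, map_sum]
    rw [coeff_sum, MvPolynomial.eval_eq']
    apply Finset.sum_congr rfl
    intro d hd
    have hdeg : d.degree = μ := by
      by_contra hne
      exact MvPolynomial.mem_support_iff.mp hd (by rw [hHc d, if_neg hne])
    have hsum3 : ∑ i : Fin 3, d i = μ := by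
      rw [Fin.sum_univ_three, ← deg3_aux]
      exact hdeg
    rw [aeval_monomial, Finsupp.prod_fintype _ _ (fun i => pow_zero _)]
    rw [algebraMap_eq, coeff_C_mul]
    congr 1
    have hproj := coeff_proj_aux (∏ i : Fin 3, lin i ^ d i) μ
    rw [← hproj, map_prod]
    have hterm : ∀ i : Fin 3,
        (aeval (fun j : Fin 2 => if j = 0 then 0 else (X 1 : MvPolynomial (Fin 2) ℂ)))
          (lin i ^ d i) = (C (w i) * X 1 : MvPolynomial (Fin 2) ℂ) ^ d i := by
      intro i
      rw [map_pow]
      congr 1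
      simp only [hlindef, map_add, map_mul, aeval_C, aeval_X, algebraMap_eq]
      norm_num
    rw [Finset.prod_congr rfl (fun i _ => hterm i)]
    have hpr : ∏ i : Fin 3, (C (w i) * X 1 : MvPolynomial (Fin 2) ℂ) ^ d i
        = C (∏ i : Fin 3, w i ^ d i) * X 1 ^ μ := by
      rw [← hsum3]
      simp only [mul_pow]
      rw [Finset.prod_mul_distrib]
      congr 1
      · simp only [map_prod, map_pow]
      · rw [Finset.prod_pow_eq_pow_sum]
    rw [hpr, C_mul_X_pow_eq_monomial, coeff_monomial, if_pos rfl]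
  have hfwit : coeff (Finsupp.single 1 μ) (affPoly P.rep e1 w F) ≠ 0 := by
    rw [hcoef_top, hkey]
    exact hwH
  have hords : ord2 (affPoly P.rep e1 w F) = μ := by
    unfold ord2
    apply le_antisymm
    · apply Nat.sInf_le
      refine ⟨Finsupp.single 1 μ, MvPolynomial.mem_support_iff.mpr hfwit, ?_⟩
      simp [Finsupp.single_apply]
    · apply le_csInf
      · exact ⟨μ, Finsupp.single 1 μ, MvPolynomial.mem_support_iff.mpr hfwit,
          by simp [Finsupp.single_apply]⟩
      · rintro b ⟨σ, hσ, rfl⟩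
        by_contra hlt
        push_neg at hlt
        exact MvPolynomial.mem_support_iff.mp hσ (hcoef_low σ (by rw [deg2_aux]; omega))
  have hbwit : coeff (twist (Finsupp.single 1 μ)) (blowSub (affPoly P.rep e1 w F)) ≠ 0 := by
    rw [coeff_blowSub_aux]
    exact hfwit
  have htle : ord2 (blowSub (affPoly P.rep e1 w F)) ≤ μ + μ := by
    unfold ord2
    apply Nat.sInf_le
    refine ⟨twist (Finsupp.single 1 μ), MvPolynomial.mem_support_iff.mpr hbwit, ?_⟩
    rw [twist_apply0, twist_apply1]
    simp [Finsupp.single_apply]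
  have htge : μ ≤ ord2 (blowSub (affPoly P.rep e1 w F)) := by
    unfold ord2
    apply le_csInf
    · refine ⟨μ + μ, twist (Finsupp.single 1 μ), MvPolynomial.mem_support_iff.mpr hbwit, ?_⟩
      rw [twist_apply0, twist_apply1]
      simp [Finsupp.single_apply]
    · rintro b ⟨τ, hτ, rfl⟩
      obtain ⟨σ, hσ, rfl⟩ := blowSub_support_aux _ τ (MvPolynomial.mem_support_iff.mp hτ)
      have hσμ : μ ≤ σ 0 + σ 1 := by
        by_contra hlt
        push_neg at hlt
        exact MvPolynomial.mem_support_iff.mp hσ (hcoef_low σ (by rw [deg2_aux]; omega))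
      rw [twist_apply0, twist_apply1]
      omega
  have hfin : multE F P L ≤ ord2 (blowSub (affPoly P.rep e1 w F)) - μ := by
    unfold multE
    apply Nat.sInf_le
    refine ⟨e1, w, he1L, hindep, ?_⟩
    rw [hords]
    omega
  exact hfin.trans (by omega)
end
end

section
/- Let P_1,…,P_8 ∈ ℙ²(ℂ) be eight distinct points such that no three of them are collinear and no six of them lie on a conic. Then: (a) every nonzero homogeneous cubic F ∈ ℂ[x,y,z] vanishing at all eight points is irreducible in ℂ[x,y,z]; and (b) there exists a nonzero homogeneous cubic F ∈ ℂ[x,y,z] vanishing at P_1,…,P_8 that is singular, i.e. there exists a point Q ∈ ℙ²(ℂ) with mult_Q(F) ≥ 2. -/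
open MvPolynomial

noncomputable section

namespace AuxSing

lemma fin3_ext {d e : Fin 3 →₀ ℕ} (h0 : d 0 = e 0) (h1 : d 1 = e 1) (h2 : d 2 = e 2) : d = e := by
  ext i; fin_cases i <;> assumption

lemma deg3 (d : Fin 3 →₀ ℕ) : d.degree = d 0 + d 1 + d 2 := by
  rw [Finsupp.degree_apply,
    Finset.sum_subset (Finset.subset_univ d.support)
      (fun i _ hi => Finsupp.notMem_support_iff.mp hi),
    Fin.sum_univ_three]

lemma homog_coeff_deg {p : MvPolynomial (Fin 3) ℂ} {n : ℕ} (h : p.IsHomogeneous n)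
    {d : Fin 3 →₀ ℕ} (hd : coeff d p ≠ 0) : d 0 + d 1 + d 2 = n := by
  rw [← deg3, Finsupp.degree_eq_weight_one]
  exact h hd

lemma isHomog_of_coeff {p : MvPolynomial (Fin 3) ℂ} {n : ℕ}
    (h : ∀ d, coeff d p ≠ 0 → d 0 + d 1 + d 2 = n) : p.IsHomogeneous n := by
  intro d hd
  rw [show (Finsupp.weight 1 : (Fin 3 →₀ ℕ) →+ ℕ) = Finsupp.degree from
    Finsupp.degree_eq_weight_one.symm, deg3]
  exact h d hd

lemma isHomog_pderiv {p : MvPolynomial (Fin 3) ℂ} {n : ℕ} (h : p.IsHomogeneous (n + 1))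
    (i : Fin 3) : (pderiv i p).IsHomogeneous n := by
  have hsum : pderiv i p = ∑ d ∈ p.support, pderiv i (monomial d (coeff d p)) := by
    rw [← map_sum, ← p.as_sum]
  rw [hsum]
  apply IsHomogeneous.sum
  intro d hd
  have hdeg : d 0 + d 1 + d 2 = n + 1 := homog_coeff_deg h (mem_support_iff.mp hd)
  rw [pderiv_monomial]
  rcases Nat.eq_zero_or_pos (d i) with h0 | h0
  · rw [h0]
    simpa using isHomogeneous_zero (Fin 3) ℂ n
  · apply isHomogeneous_monomial
    rw [deg3]
    simp only [Finsupp.tsub_apply, Finsupp.single_apply]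
    fin_cases i <;>
      simp only [Fin.zero_eta, Fin.mk_one, Fin.reduceFinMk, Fin.isValue, Fin.reduceEq,
        reduceIte] at h0 ⊢ <;>
      omega

lemma finprod3 (x : Fin 3 → ℂ) (d : Fin 3 →₀ ℕ) :
    (d.prod fun j k => x j ^ k) = x 0 ^ d 0 * x 1 ^ d 1 * x 2 ^ d 2 := by
  rw [Finsupp.prod_fintype _ _ (fun j => pow_zero (x j)), Fin.prod_univ_three]

lemma euler_term (x : Fin 3 → ℂ) (d : Fin 3 →₀ ℕ) (c : ℂ) (i : Fin 3) :
    x i * eval x (pderiv i (monomial d c)) =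
      (d i : ℂ) * c * (x 0 ^ d 0 * x 1 ^ d 1 * x 2 ^ d 2) := by
  rw [pderiv_monomial, eval_monomial, finprod3]
  rcases Nat.eq_zero_or_pos (d i) with h0 | h0
  · rw [h0]; simp
  · have h : d i ≠ 0 := h0.ne'
    fin_cases i <;>
      simp only [Fin.zero_eta, Fin.mk_one, Fin.reduceFinMk, Fin.isValue, Finsupp.tsub_apply,
        Finsupp.single_apply, Fin.reduceEq, reduceIte] at h ⊢ <;>
      norm_num
    · rw [← mul_pow_sub_one h (x 0)]; ring
    · rw [← mul_pow_sub_one h (x 1)]; ring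
    · rw [← mul_pow_sub_one h (x 2)]; ring

lemma euler_eval {p : MvPolynomial (Fin 3) ℂ} {n : ℕ} (h : p.IsHomogeneous n) (x : Fin 3 → ℂ) :
    (n : ℂ) * eval x p =
      x 0 * eval x (pderiv 0 p) + x 1 * eval x (pderiv 1 p) + x 2 * eval x (pderiv 2 p) := by
  have hps : ∀ i : Fin 3, eval x (pderiv i p) =
      ∑ d ∈ p.support, eval x (pderiv i (monomial d (coeff d p))) := by
    intro i
    rw [← map_sum, ← map_sum, ← p.as_sum]
  have hp : eval x p = ∑ d ∈ p.support, eval x (monomial d (coeff d p)) := by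
    rw [← map_sum, ← p.as_sum]
  rw [hp, hps 0, hps 1, hps 2, Finset.mul_sum, Finset.mul_sum, Finset.mul_sum, Finset.mul_sum,
    ← Finset.sum_add_distrib, ← Finset.sum_add_distrib]
  refine Finset.sum_congr rfl fun d hd => ?_
  have hdeg : d 0 + d 1 + d 2 = n := homog_coeff_deg h (mem_support_iff.mp hd)
  rw [euler_term, euler_term, euler_term, eval_monomial, finprod3, ← hdeg]
  push_cast
  ring

lemma eval_smul_homog {p : MvPolynomial (Fin 3) ℂ} {n : ℕ} (h : p.IsHomogeneous n) (c : ℂ)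
    (x : Fin 3 → ℂ) : eval (c • x) p = c ^ n * eval x p := by
  have h1 : eval (c • x) p = ∑ d ∈ p.support, eval (c • x) (monomial d (coeff d p)) := by
    rw [← map_sum, ← p.as_sum]
  have h2 : eval x p = ∑ d ∈ p.support, eval x (monomial d (coeff d p)) := by
    rw [← map_sum, ← p.as_sum]
  rw [h1, h2, Finset.mul_sum]
  refine Finset.sum_congr rfl fun d hd => ?_
  have hdeg : d 0 + d 1 + d 2 = n := homog_coeff_deg h (mem_support_iff.mp hd)
  rw [eval_monomial, eval_monomial, finprod3, finprod3]
  simp only [Pi.smul_apply, smul_eq_mul]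
  rw [mul_pow, mul_pow, mul_pow, ← hdeg, pow_add, pow_add]
  ring

lemma iter_pderiv_monomial (i : Fin 3) (k : ℕ) (d : Fin 3 →₀ ℕ) (a : ℂ) :
    (fun G => pderiv i G)^[k] (monomial d a) =
      monomial (d - (Finsupp.single i k : Fin 3 →₀ ℕ)) (a * ((d i).descFactorial k : ℕ)) := by
  induction k with
  | zero => simp
  | succ k ih =>
    rw [Function.iterate_succ_apply', ih, pderiv_monomial]
    have he : (d - (Finsupp.single i k : Fin 3 →₀ ℕ)) - (Finsupp.single i 1 : Fin 3 →₀ ℕ)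
        = d - (Finsupp.single i (k + 1) : Fin 3 →₀ ℕ) := by
      ext j
      simp only [Finsupp.tsub_apply, Finsupp.single_apply]
      by_cases hij : i = j <;> simp [hij] <;> omega
    have hv : (d - (Finsupp.single i k : Fin 3 →₀ ℕ)) i = d i - k := by
      simp [Finsupp.tsub_apply]
    rw [he, hv, Nat.descFactorial_succ]
    congr 1
    push_cast
    ring

lemma iter_pderiv_sum {s : Finset (Fin 3 →₀ ℕ)} (f : (Fin 3 →₀ ℕ) → MvPolynomial (Fin 3) ℂ)
    (i : Fin 3) (k : ℕ) :
    (fun G => pderiv i G)^[k] (∑ d ∈ s, f d) = ∑ d ∈ s, (fun G => pderiv i G)^[k] (f d) := by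
  induction k with
  | zero => simp
  | succ k ih =>
    rw [Function.iterate_succ_apply', ih, map_sum]
    exact Finset.sum_congr rfl fun d _ => (Function.iterate_succ_apply' _ _ _).symm

lemma pd_sum {s : Finset (Fin 3 →₀ ℕ)} (f : (Fin 3 →₀ ℕ) → MvPolynomial (Fin 3) ℂ)
    (ν : Fin 3 → ℕ) : pd ν (∑ d ∈ s, f d) = ∑ d ∈ s, pd ν (f d) := by
  unfold pd
  rw [iter_pderiv_sum, iter_pderiv_sum, iter_pderiv_sum]

lemma pd_monomial (ν : Fin 3 → ℕ) (d : Fin 3 →₀ ℕ) (a : ℂ) :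
    pd ν (monomial d a) =
      monomial (d - (Finsupp.single 0 (ν 0) + Finsupp.single 1 (ν 1) +
          Finsupp.single 2 (ν 2) : Fin 3 →₀ ℕ))
        (a * ((d 0).descFactorial (ν 0) : ℕ) * ((d 1).descFactorial (ν 1) : ℕ) *
          ((d 2).descFactorial (ν 2) : ℕ)) := by
  unfold pd
  rw [iter_pderiv_monomial, iter_pderiv_monomial, iter_pderiv_monomial]
  have h1 : (d - (Finsupp.single 2 (ν 2) : Fin 3 →₀ ℕ)) 1 = d 1 := by
    simp [Finsupp.tsub_apply, Finsupp.single_apply]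
  have h0 : ((d - (Finsupp.single 2 (ν 2) : Fin 3 →₀ ℕ)) -
      (Finsupp.single 1 (ν 1) : Fin 3 →₀ ℕ)) 0 = d 0 := by
    simp [Finsupp.tsub_apply, Finsupp.single_apply]
  rw [h1, h0]
  have hexp : (d - (Finsupp.single 2 (ν 2) : Fin 3 →₀ ℕ) - (Finsupp.single 1 (ν 1) : Fin 3 →₀ ℕ) -
      (Finsupp.single 0 (ν 0) : Fin 3 →₀ ℕ)) =
      d - (Finsupp.single 0 (ν 0) + Finsupp.single 1 (ν 1) +
          Finsupp.single 2 (ν 2) : Fin 3 →₀ ℕ) := by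
    ext j
    simp only [Finsupp.tsub_apply, Finsupp.coe_add, Pi.add_apply, Finsupp.single_apply]
    fin_cases j <;>
      simp only [Fin.zero_eta, Fin.mk_one, Fin.reduceFinMk, Fin.isValue, Fin.reduceEq,
        reduceIte] <;>
      omega
  rw [hexp]
  congr 1
  ring

lemma pd_zero_eq (F : MvPolynomial (Fin 3) ℂ) {ν : Fin 3 → ℕ}
    (h0 : ν 0 = 0) (h1 : ν 1 = 0) (h2 : ν 2 = 0) : pd ν F = F := by
  unfold pd
  rw [h0, h1, h2]
  simp

lemma dep_vec (v w : Fin 3 → ℂ)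
    (h0 : v 1 * w 2 - v 2 * w 1 = 0) (h1 : v 2 * w 0 - v 0 * w 2 = 0)
    (h2 : v 0 * w 1 - v 1 * w 0 = 0) :
    ∃ a b : ℂ, ¬(a = 0 ∧ b = 0) ∧ ∀ i, a * v i + b * w i = 0 := by
  by_cases hv0 : v 0 = 0 ∧ v 1 = 0 ∧ v 2 = 0
  · refine ⟨1, 0, by simp, fun i => ?_⟩
    fin_cases i <;> simp [hv0.1, hv0.2.1, hv0.2.2]
  · push_neg at hv0
    by_cases ha : v 0 = 0
    · by_cases hb : v 1 = 0
      · have hc : v 2 ≠ 0 := hv0 ha hb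
        refine ⟨w 2, -v 2, fun hh => hc (by simpa using hh.2), fun i => ?_⟩
        fin_cases i <;>
          simp only [Fin.zero_eta, Fin.mk_one, Fin.reduceFinMk, Fin.isValue]
        · linear_combination -h1
        · linear_combination h0
        · ring
      · refine ⟨w 1, -v 1, fun hh => hb (by simpa using hh.2), fun i => ?_⟩
        fin_cases i <;>
          simp only [Fin.zero_eta, Fin.mk_one, Fin.reduceFinMk, Fin.isValue]
        · linear_combination h2
        · ring
        · linear_combination -h0
    · refine ⟨w 0, -v 0, fun hh => ha (by simpa using hh.2), fun i => ?_⟩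
      fin_cases i <;>
        simp only [Fin.zero_eta, Fin.mk_one, Fin.reduceFinMk, Fin.isValue]
      · ring
      · linear_combination -h2
      · linear_combination h1

lemma two_le_multP {H : MvPolynomial (Fin 3) ℂ} (hH : H.IsHomogeneous 3) (hne : H ≠ 0)
    {x0 : Fin 3 → ℂ} (hx0 : x0 ≠ 0) (h0 : eval x0 H = 0) (h1 : ∀ i, eval x0 (pderiv i H) = 0) :
    2 ≤ multP H (Projectivization.mk ℂ x0 hx0) := by
  set Q := Projectivization.mk ℂ x0 hx0 with hQdef
  obtain ⟨u, hu⟩ : ∃ u : ℂˣ, (u : ℂ) • x0 = Q.rep := by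
    have h := Q.mk_rep
    rw [hQdef] at h
    exact (Projectivization.mk_eq_mk_iff ℂ _ _ (Projectivization.rep_nonzero Q) hx0).mp h
  have hrep : Q.rep = (u : ℂ) • x0 := hu.symm
  have hevalH : eval Q.rep H = 0 := by
    rw [hrep, eval_smul_homog hH, h0, mul_zero]
  have hevalD : ∀ i, eval Q.rep (pderiv i H) = 0 := by
    intro i
    rw [hrep, eval_smul_homog (isHomog_pderiv hH i) , h1 i, mul_zero]
  -- nonemptiness witness
  obtain ⟨d, hd⟩ := support_nonempty.mpr hne
  have hc : coeff d H ≠ 0 := mem_support_iff.mp hd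
  have hdeg : d 0 + d 1 + d 2 = 3 := homog_coeff_deg hH hc
  have hpd : pd (fun j => d j) H =
      C (coeff d H * ((d 0).descFactorial (d 0) : ℕ) * ((d 1).descFactorial (d 1) : ℕ) *
        ((d 2).descFactorial (d 2) : ℕ)) := by
    have hH2 : pd (fun j => d j) H =
        ∑ e ∈ H.support, pd (fun j => d j) (monomial e (coeff e H)) := by
      conv_lhs => rw [H.as_sum]
      exact pd_sum _ _
    rw [hH2, Finset.sum_eq_single d]
    · rw [pd_monomial]
      have hzero : d - (Finsupp.single 0 (d 0) + Finsupp.single 1 (d 1) +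
          Finsupp.single 2 (d 2) : Fin 3 →₀ ℕ) = 0 := by
        ext j
        simp only [Finsupp.tsub_apply, Finsupp.coe_add, Pi.add_apply, Finsupp.single_apply,
          Finsupp.coe_zero, Pi.zero_apply]
        fin_cases j <;> simp
      rw [hzero, monomial_zero']
    · intro e he hne'
      have hdege : e 0 + e 1 + e 2 = 3 := homog_coeff_deg hH (mem_support_iff.mp he)
      have hlt : e 0 < d 0 ∨ e 1 < d 1 ∨ e 2 < d 2 := by
        by_contra hcon
        push_neg at hcon
        exact hne' (fin3_ext (by omega) (by omega) (by omega))
      rw [pd_monomial]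
      rcases hlt with hl | hl | hl
      · rw [Nat.descFactorial_eq_zero_iff_lt.mpr hl]
        simp
      · rw [Nat.descFactorial_eq_zero_iff_lt.mpr hl]
        simp
      · rw [Nat.descFactorial_eq_zero_iff_lt.mpr hl]
        simp
    · intro hdd
      exact absurd hd hdd
  have hnonzero : eval Q.rep (pd (fun j => d j) H) ≠ 0 := by
    rw [hpd, eval_C]
    refine mul_ne_zero (mul_ne_zero (mul_ne_zero hc ?_) ?_) ?_ <;>
      · rw [Nat.descFactorial_self]
        exact_mod_cast Nat.cast_ne_zero.mpr (Nat.factorial_ne_zero _)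
  refine le_csInf ⟨3, fun j => d j, by simpa using hdeg, hnonzero⟩ ?_
  rintro m ⟨ν, hν, hev⟩
  by_contra hlt
  push_neg at hlt
  interval_cases m
  · exact hev (by rw [pd_zero_eq H (by omega) (by omega) (by omega)]; exact hevalH)
  · have : (ν 0 = 1 ∧ ν 1 = 0 ∧ ν 2 = 0) ∨ (ν 0 = 0 ∧ ν 1 = 1 ∧ ν 2 = 0) ∨
        (ν 0 = 0 ∧ ν 1 = 0 ∧ ν 2 = 1) := by omega
    rcases this with ⟨ha, hb, hc'⟩ | ⟨ha, hb, hc'⟩ | ⟨ha, hb, hc'⟩ <;>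
    · apply hev
      unfold pd
      rw [ha, hb, hc']
      simpa using hevalD _


/-- Component of a product at the sum of lower bounds of supports. -/
lemma comp_mul_bot {A B : MvPolynomial (Fin 3) ℂ} {m k : ℕ}
    (hA : ∀ d ∈ A.support, m ≤ d.degree) (hB : ∀ d ∈ B.support, k ≤ d.degree) :
    homogeneousComponent (m + k) (A * B) =
      homogeneousComponent m A * homogeneousComponent k B := by
  apply MvPolynomial.ext
  intro D
  rw [coeff_homogeneousComponent, coeff_mul, coeff_mul]
  by_cases hD : D.degree = m + k
  · rw [if_pos hD]
    refine Finset.sum_congr rfl ?_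
    rintro ⟨u, v⟩ hx
    have huv : u + v = D := Finset.HasAntidiagonal.mem_antidiagonal.mp hx
    have hdadd : u.degree + v.degree = D.degree := by
      rw [← huv, deg3, deg3, deg3]
      simp only [Finsupp.coe_add, Pi.add_apply]
      ring
    rw [coeff_homogeneousComponent, coeff_homogeneousComponent]
    by_cases hu : u.degree = m
    · rw [if_pos hu, if_pos (by omega : v.degree = k)]
    · rw [if_neg hu]
      rcases Nat.lt_or_ge u.degree m with hlt | hge
      · have : coeff u A = 0 := by
          by_contra hc
          exact absurd (hA u (mem_support_iff.mpr hc)) (by omega)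
        rw [this, zero_mul, zero_mul]
      · have hvlt : v.degree < k := by omega
        have : coeff v B = 0 := by
          by_contra hc
          exact absurd (hB v (mem_support_iff.mpr hc)) (by omega)
        rw [this, mul_zero]
        rw [if_neg (by omega : ¬ v.degree = k), mul_zero]
  · rw [if_neg hD]
    symm
    apply Finset.sum_eq_zero
    rintro ⟨u, v⟩ hx
    have huv : u + v = D := Finset.HasAntidiagonal.mem_antidiagonal.mp hx
    have hdadd : u.degree + v.degree = D.degree := by
      rw [← huv, deg3, deg3, deg3]
      simp only [Finsupp.coe_add, Pi.add_apply]
      ring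
    rw [coeff_homogeneousComponent, coeff_homogeneousComponent]
    by_cases hu : u.degree = m
    · rw [if_neg (by omega : ¬ v.degree = k), mul_zero]
    · rw [if_neg hu, zero_mul]

/-- Component of a product at the sum of upper bounds of supports. -/
lemma comp_mul_top {A B : MvPolynomial (Fin 3) ℂ} {m k : ℕ}
    (hA : ∀ d ∈ A.support, d.degree ≤ m) (hB : ∀ d ∈ B.support, d.degree ≤ k) :
    homogeneousComponent (m + k) (A * B) =
      homogeneousComponent m A * homogeneousComponent k B := by
  apply MvPolynomial.ext
  intro D
  rw [coeff_homogeneousComponent, coeff_mul, coeff_mul]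
  by_cases hD : D.degree = m + k
  · rw [if_pos hD]
    refine Finset.sum_congr rfl ?_
    rintro ⟨u, v⟩ hx
    have huv : u + v = D := Finset.HasAntidiagonal.mem_antidiagonal.mp hx
    have hdadd : u.degree + v.degree = D.degree := by
      rw [← huv, deg3, deg3, deg3]
      simp only [Finsupp.coe_add, Pi.add_apply]
      ring
    rw [coeff_homogeneousComponent, coeff_homogeneousComponent]
    by_cases hu : u.degree = m
    · rw [if_pos hu, if_pos (by omega : v.degree = k)]
    · rw [if_neg hu]
      rcases Nat.lt_or_ge m u.degree with hlt | hge
      · have : coeff u A = 0 := by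
          by_contra hc
          exact absurd (hA u (mem_support_iff.mpr hc)) (by omega)
        rw [this, zero_mul, zero_mul]
      · have hvgt : k < v.degree := by omega
        have : coeff v B = 0 := by
          by_contra hc
          exact absurd (hB v (mem_support_iff.mpr hc)) (by omega)
        rw [this, mul_zero]
        rw [if_neg (by omega : ¬ v.degree = k), mul_zero]
  · rw [if_neg hD]
    symm
    apply Finset.sum_eq_zero
    rintro ⟨u, v⟩ hx
    have huv : u + v = D := Finset.HasAntidiagonal.mem_antidiagonal.mp hx
    have hdadd : u.degree + v.degree = D.degree := by
      rw [← huv, deg3, deg3, deg3]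
      simp only [Finsupp.coe_add, Pi.add_apply]
      ring
    rw [coeff_homogeneousComponent, coeff_homogeneousComponent]
    by_cases hu : u.degree = m
    · rw [if_neg (by omega : ¬ v.degree = k), mul_zero]
    · rw [if_neg hu, zero_mul]

lemma exists_min_comp {A : MvPolynomial (Fin 3) ℂ} (hA : A ≠ 0) :
    ∃ m, homogeneousComponent m A ≠ 0 ∧ ∀ d ∈ A.support, m ≤ d.degree := by
  have hsupp : A.support.Nonempty := support_nonempty.mpr hA
  have himg : (A.support.image Finsupp.degree).Nonempty := hsupp.image _
  refine ⟨(A.support.image Finsupp.degree).min' himg, ?_, ?_⟩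
  · obtain ⟨d, hd, hdeg⟩ := Finset.mem_image.mp ((A.support.image Finsupp.degree).min'_mem himg)
    intro h0
    have : coeff d (homogeneousComponent ((A.support.image Finsupp.degree).min' himg) A) = 0 := by
      rw [h0]; simp
    rw [coeff_homogeneousComponent, if_pos hdeg] at this
    exact mem_support_iff.mp hd this
  · intro d hd
    exact Finset.min'_le _ _ (Finset.mem_image_of_mem _ hd)

lemma exists_max_comp {A : MvPolynomial (Fin 3) ℂ} (hA : A ≠ 0) :
    ∃ m, homogeneousComponent m A ≠ 0 ∧ ∀ d ∈ A.support, d.degree ≤ m := by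
  have hsupp : A.support.Nonempty := support_nonempty.mpr hA
  have himg : (A.support.image Finsupp.degree).Nonempty := hsupp.image _
  refine ⟨(A.support.image Finsupp.degree).max' himg, ?_, ?_⟩
  · obtain ⟨d, hd, hdeg⟩ := Finset.mem_image.mp ((A.support.image Finsupp.degree).max'_mem himg)
    intro h0
    have : coeff d (homogeneousComponent ((A.support.image Finsupp.degree).max' himg) A) = 0 := by
      rw [h0]; simp
    rw [coeff_homogeneousComponent, if_pos hdeg] at this
    exact mem_support_iff.mp hd this
  · intro d hd
    exact Finset.le_max' _ _ (Finset.mem_image_of_mem _ hd)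

lemma homog_factor {A B : MvPolynomial (Fin 3) ℂ} {n : ℕ} (hA : A ≠ 0) (hB : B ≠ 0)
    (h : (A * B).IsHomogeneous n) :
    ∃ a b : ℕ, a + b = n ∧ A.IsHomogeneous a ∧ B.IsHomogeneous b := by
  obtain ⟨ma, hma, hmalow⟩ := exists_min_comp hA
  obtain ⟨mb, hmb, hmblow⟩ := exists_min_comp hB
  obtain ⟨Ma, hMa, hMahigh⟩ := exists_max_comp hA
  obtain ⟨Mb, hMb, hMbhigh⟩ := exists_max_comp hB
  have hABmem : A * B ∈ homogeneousSubmodule (Fin 3) ℂ n := (mem_homogeneousSubmodule _ _).mpr h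
  have hbot : homogeneousComponent (ma + mb) (A * B) ≠ 0 := by
    rw [comp_mul_bot hmalow hmblow]
    exact mul_ne_zero hma hmb
  have htop : homogeneousComponent (Ma + Mb) (A * B) ≠ 0 := by
    rw [comp_mul_top hMahigh hMbhigh]
    exact mul_ne_zero hMa hMb
  have h1 : ma + mb = n := by
    by_contra hc
    rw [homogeneousComponent_of_mem hABmem, if_neg hc] at hbot
    exact hbot rfl
  have h2 : Ma + Mb = n := by
    by_contra hc
    rw [homogeneousComponent_of_mem hABmem, if_neg hc] at htop
    exact htop rfl
  have hma_le : ma ≤ Ma := by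
    obtain ⟨d, hd⟩ := support_nonempty.mpr hA
    exact le_trans (hmalow d hd) (hMahigh d hd)
  have hmb_le : mb ≤ Mb := by
    obtain ⟨d, hd⟩ := support_nonempty.mpr hB
    exact le_trans (hmblow d hd) (hMbhigh d hd)
  have hea : ma = Ma := by omega
  have heb : mb = Mb := by omega
  refine ⟨ma, mb, h1, ?_, ?_⟩
  · apply isHomog_of_coeff
    intro d hd
    have h3 := hmalow d (mem_support_iff.mpr hd)
    have h4 := hMahigh d (mem_support_iff.mpr hd)
    rw [← deg3]
    omega
  · apply isHomog_of_coeff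
    intro d hd
    have h3 := hmblow d (mem_support_iff.mpr hd)
    have h4 := hMbhigh d (mem_support_iff.mpr hd)
    rw [← deg3]
    omega

lemma isUnit_homog0 {A : MvPolynomial (Fin 3) ℂ} (h : A.IsHomogeneous 0) (hA : A ≠ 0) :
    IsUnit A := by
  have h1 : homogeneousComponent 0 A = A := by
    rw [homogeneousComponent_of_mem ((mem_homogeneousSubmodule _ _).mpr h), if_pos rfl]
  set c := coeff 0 A with hcdef
  have hA0 : A = C c := by
    conv_lhs => rw [← h1, homogeneousComponent_zero]
  have hc : c ≠ 0 := by
    intro h0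
    apply hA
    rw [hA0, h0, map_zero]
  rw [isUnit_iff_exists_inv]
  exact ⟨C c⁻¹, by rw [hA0, ← C_mul, mul_inv_cancel₀ hc, C_1]⟩

lemma not_isUnit_homog {F : MvPolynomial (Fin 3) ℂ} {n : ℕ} (h : F.IsHomogeneous n)
    (hn : 0 < n) (hF : F ≠ 0) : ¬ IsUnit F := by
  intro hu
  obtain ⟨G, hG⟩ := hu.exists_right_inv
  have hG0 : G ≠ 0 := by
    rintro rfl
    rw [mul_zero] at hG
    exact one_ne_zero hG.symm
  obtain ⟨a, b, hab, hFa, _⟩ := homog_factor hF hG0 (by rw [hG]; exact isHomogeneous_one _ _)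
  have : n = a := IsHomogeneous.inj_right h hFa hF
  omega

lemma linear_rep {A : MvPolynomial (Fin 3) ℂ} (hA : A.IsHomogeneous 1) :
    A = C (coeff (Finsupp.single 0 1) A) * X 0 + C (coeff (Finsupp.single 1 1) A) * X 1 +
      C (coeff (Finsupp.single 2 1) A) * X 2 := by
  have hsingle : ∀ (i : Fin 3) (j : Fin 3), (Finsupp.single i 1 : Fin 3 →₀ ℕ) j =
      if i = j then 1 else 0 := fun i j => Finsupp.single_apply
  apply MvPolynomial.ext
  intro d
  simp only [coeff_add, coeff_C_mul, coeff_X']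
  by_cases hdeg : d 0 + d 1 + d 2 = 1
  · have hcase : d = Finsupp.single 0 1 ∨ d = Finsupp.single 1 1 ∨ d = Finsupp.single 2 1 := by
      rcases (by omega : (d 0 = 1 ∧ d 1 = 0 ∧ d 2 = 0) ∨ (d 0 = 0 ∧ d 1 = 1 ∧ d 2 = 0) ∨
        (d 0 = 0 ∧ d 1 = 0 ∧ d 2 = 1)) with ⟨h0, h1, h2⟩ | ⟨h0, h1, h2⟩ | ⟨h0, h1, h2⟩
      · exact Or.inl (fin3_ext (by simp [hsingle, h0]) (by simp [hsingle, h1])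
          (by simp [hsingle, h2]))
      · exact Or.inr (Or.inl (fin3_ext (by simp [hsingle, h0]) (by simp [hsingle, h1])
          (by simp [hsingle, h2])))
      · exact Or.inr (Or.inr (fin3_ext (by simp [hsingle, h0]) (by simp [hsingle, h1])
          (by simp [hsingle, h2])))
    have hne : ∀ (i j : Fin 3), i ≠ j →
        (Finsupp.single i 1 : Fin 3 →₀ ℕ) ≠ Finsupp.single j 1 := by
      intro i j hij hc
      have := DFunLike.congr_fun hc i
      rw [hsingle, hsingle, if_pos rfl, if_neg (by exact fun h => hij h.symm)] at this
      exact one_ne_zero this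
    rcases hcase with rfl | rfl | rfl
    · rw [if_pos rfl, if_neg (hne 1 0 (by decide)), if_neg (hne 2 0 (by decide))]
      ring
    · rw [if_pos rfl, if_neg (hne 0 1 (by decide)), if_neg (hne 2 1 (by decide))]
      ring
    · rw [if_pos rfl, if_neg (hne 0 2 (by decide)), if_neg (hne 1 2 (by decide))]
      ring
  · have hc : coeff d A = 0 := by
      apply hA.coeff_eq_zero
      rw [deg3]
      omega
    have hd1 : (Finsupp.single (0 : Fin 3) 1 : Fin 3 →₀ ℕ) ≠ d := by
      intro hc'
      rw [← hc'] at hdeg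
      simp [hsingle] at hdeg
    have hd2 : (Finsupp.single (1 : Fin 3) 1 : Fin 3 →₀ ℕ) ≠ d := by
      intro hc'
      rw [← hc'] at hdeg
      simp [hsingle] at hdeg
    have hd3 : (Finsupp.single (2 : Fin 3) 1 : Fin 3 →₀ ℕ) ≠ d := by
      intro hc'
      rw [← hc'] at hdeg
      simp [hsingle] at hdeg
    rw [hc, if_neg hd1, if_neg hd2, if_neg hd3]
    ring

lemma line_of_linear {A : MvPolynomial (Fin 3) ℂ} (hA1 : A.IsHomogeneous 1) (hA : A ≠ 0) :
    ∃ L : ProjLine, ∀ P : P2, eval P.rep A = 0 → memLine P L := by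
  set c0 := coeff (Finsupp.single 0 1) A with hc0
  set c1 := coeff (Finsupp.single 1 1) A with hc1
  set c2 := coeff (Finsupp.single 2 1) A with hc2
  have hrep := linear_rep hA1
  set φ : (Fin 3 → ℂ) →ₗ[ℂ] ℂ :=
    c0 • LinearMap.proj 0 + c1 • LinearMap.proj 1 + c2 • LinearMap.proj 2 with hφ
  have hφval : ∀ x : Fin 3 → ℂ, φ x = eval x A := by
    intro x
    conv_rhs => rw [hrep]
    simp [hφ, LinearMap.proj_apply, hc0, hc1, hc2]
  have hcs : ¬(c0 = 0 ∧ c1 = 0 ∧ c2 = 0) := by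
    rintro ⟨h0, h1, h2⟩
    apply hA
    rw [hrep, ← hc0, ← hc1, ← hc2, h0, h1, h2]
    simp
  obtain ⟨x0, hx0⟩ : ∃ x0 : Fin 3 → ℂ, φ x0 ≠ 0 := by
    by_cases h0 : c0 = 0
    · by_cases h1 : c1 = 0
      · have h2 : c2 ≠ 0 := fun h => hcs ⟨h0, h1, h⟩
        exact ⟨Pi.single 2 1, by simp [hφ, LinearMap.proj_apply, Pi.single_apply, h0, h1, h2]⟩
      · exact ⟨Pi.single 1 1, by simp [hφ, LinearMap.proj_apply, Pi.single_apply, h1]⟩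
    · exact ⟨Pi.single 0 1, by simp [hφ, LinearMap.proj_apply, Pi.single_apply, h0]⟩
  have hsurj : Function.Surjective φ := by
    intro y
    refine ⟨(y / φ x0) • x0, ?_⟩
    rw [map_smul, smul_eq_mul, div_mul_cancel₀ _ hx0]
  have hrange : LinearMap.range φ = ⊤ := LinearMap.range_eq_top.mpr hsurj
  have hker : Module.finrank ℂ (LinearMap.ker φ) = 2 := by
    have h := LinearMap.finrank_range_add_finrank_ker φ
    rw [hrange, finrank_top, Module.finrank_self, Module.finrank_fin_fun] at h
    omega
  refine ⟨⟨LinearMap.ker φ, hker⟩, ?_⟩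
  intro P hP
  show P.rep ∈ LinearMap.ker φ
  rw [LinearMap.mem_ker, hφval]
  exact hP

lemma no_line_conic {Ppts : Fin 8 → P2} (hgen : noThreeCollinear Ppts)
    (hconic : noSixOnConic Ppts) {A B : MvPolynomial (Fin 3) ℂ}
    (hA1 : A.IsHomogeneous 1) (hB2 : B.IsHomogeneous 2) (hA : A ≠ 0) (hB : B ≠ 0)
    (hz : ∀ i, eval (Ppts i).rep A * eval (Ppts i).rep B = 0) : False := by
  classical
  set s := Finset.univ.filter (fun i => eval (Ppts i).rep A = 0) with hs
  by_cases hcard : 3 ≤ s.card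
  · obtain ⟨t, hts, htc⟩ := Finset.exists_subset_card_eq hcard
    obtain ⟨i, j, k, hij, hik, hjk, rfl⟩ := Finset.card_eq_three.mp htc
    obtain ⟨L, hL⟩ := line_of_linear hA1 hA
    apply hgen i j k hij hik hjk
    have hmem : ∀ x ∈ ({i, j, k} : Finset (Fin 8)), eval (Ppts x).rep A = 0 := by
      intro x hx
      have hxs := hts hx
      rw [hs, Finset.mem_filter] at hxs
      exact hxs.2
    exact ⟨L, hL _ (hmem i (by simp)), hL _ (hmem j (by simp)), hL _ (hmem k (by simp))⟩
  · have hcompl : 6 ≤ sᶜ.card := by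
      rw [Finset.card_compl]
      simp only [Fintype.card_fin]
      omega
    obtain ⟨t, hts, htc⟩ := Finset.exists_subset_card_eq hcompl
    refine hconic t htc B hB hB2 ?_
    intro i hi
    have hiA : eval (Ppts i).rep A ≠ 0 := by
      have hxs := hts hi
      rw [Finset.mem_compl, hs, Finset.mem_filter] at hxs
      intro hc
      exact hxs ⟨Finset.mem_univ i, hc⟩
    rcases mul_eq_zero.mp (hz i) with h | h
    · exact absurd h hiA
    · exact h

lemma part_a {Ppts : Fin 8 → P2} (hgen : noThreeCollinear Ppts) (hconic : noSixOnConic Ppts)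
    {F : MvPolynomial (Fin 3) ℂ} (hF0 : F ≠ 0) (hF3 : F.IsHomogeneous 3)
    (hvan : ∀ i, eval (Ppts i).rep F = 0) : Irreducible F := by
  rw [irreducible_iff]
  refine ⟨not_isUnit_homog hF3 (by norm_num) hF0, ?_⟩
  intro A B hFAB
  by_contra hcon
  push_neg at hcon
  obtain ⟨hAu, hBu⟩ := hcon
  have hA0 : A ≠ 0 := by rintro rfl; rw [zero_mul] at hFAB; exact hF0 hFAB
  have hB0 : B ≠ 0 := by rintro rfl; rw [mul_zero] at hFAB; exact hF0 hFAB
  obtain ⟨a, b, hab, hAh, hBh⟩ := homog_factor hA0 hB0 (hFAB ▸ hF3)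
  have ha : a ≠ 0 := fun h => hAu (isUnit_homog0 (h ▸ hAh) hA0)
  have hb : b ≠ 0 := fun h => hBu (isUnit_homog0 (h ▸ hBh) hB0)
  have hz : ∀ i, eval (Ppts i).rep A * eval (Ppts i).rep B = 0 := by
    intro i
    rw [← map_mul, ← hFAB]
    exact hvan i
  rcases (by omega : (a = 1 ∧ b = 2) ∨ (a = 2 ∧ b = 1)) with ⟨ha1, hb2⟩ | ⟨ha2, hb1⟩
  · exact no_line_conic hgen hconic (ha1 ▸ hAh) (hb2 ▸ hBh) hA0 hB0 hz
  · refine no_line_conic hgen hconic (hb1 ▸ hBh) (ha2 ▸ hAh) hB0 hA0 ?_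
    intro i
    rw [mul_comm]
    exact hz i


lemma finite_homog_set (m : ℕ) : ({d : Fin 3 →₀ ℕ | d.degree = m}).Finite :=
  (Finsupp.finite_of_degree_le m).subset (fun _ hd => le_of_eq hd)

lemma degree_eq_sum_id (f : Fin 3 →₀ ℕ) : f.degree = f.sum fun _ => id := by
  simp [Finsupp.degree_apply, Finsupp.sum]

lemma finrank_homog (m : ℕ) :
    2 * Module.finrank ℂ (homogeneousSubmodule (Fin 3) ℂ m) = (m + 1) * (m + 2) := by
  classical
  set s : Set (Fin 3 →₀ ℕ) := {d | d.degree = m} with hsdef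
  haveI : Fintype ↥s := (finite_homog_set m).fintype
  have heq : homogeneousSubmodule (Fin 3) ℂ m = restrictSupport ℂ s :=
    homogeneousSubmodule_eq_finsupp_supported (Fin 3) ℂ m
  have h1 : Module.finrank ℂ (homogeneousSubmodule (Fin 3) ℂ m) = Fintype.card ↥s := by
    rw [LinearEquiv.finrank_eq (LinearEquiv.ofEq _ _ heq)]
    exact Module.finrank_eq_card_basis (basisRestrictSupport ℂ s)
  have e : ↥s ≃ Sym (Fin 3) m := by
    refine ⟨fun d => ⟨Finsupp.toMultiset d.1, ?_⟩, fun t => ⟨Multiset.toFinsupp t.1, ?_⟩, ?_, ?_⟩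
    · rw [Finsupp.card_toMultiset, ← degree_eq_sum_id]
      exact d.2
    · show (Multiset.toFinsupp (t : Multiset (Fin 3))).degree = m
      rw [degree_eq_sum_id, Multiset.toFinsupp_sum_eq]
      exact t.2
    · intro d
      ext1
      simp
    · intro t
      ext1
      simp
  have h2 : Fintype.card ↥s = Fintype.card (Sym (Fin 3) m) := Fintype.card_congr e
  rw [h1, h2, Sym.card_sym_eq_multichoose, Nat.multichoose_eq, Fintype.card_fin]
  have h3 : (3 + m - 1).choose m = (m + 2).choose 2 := by
    have : (3 + m - 1) = m + 2 := by omega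
    rw [this]
    have h4 := Nat.choose_symm (n := m + 2) (k := 2) (by omega)
    have h5 : m + 2 - 2 = m := by omega
    rw [h5] at h4
    exact h4
  rw [h3, Nat.choose_two_right, show m + 2 - 1 = m + 1 from rfl]
  have heven : 2 ∣ (m + 2) * (m + 1) := by
    have h6 := Nat.even_mul_succ_self (m + 1)
    rw [mul_comm] at h6
    exact h6.two_dvd
  rw [Nat.mul_div_cancel' heven]
  ring

instance fd_homog (m : ℕ) : FiniteDimensional ℂ (homogeneousSubmodule (Fin 3) ℂ m) := by
  classical
  set s : Set (Fin 3 →₀ ℕ) := {d | d.degree = m} with hsdef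
  haveI : Fintype ↥s := (finite_homog_set m).fintype
  have heq : homogeneousSubmodule (Fin 3) ℂ m = restrictSupport ℂ s :=
    homogeneousSubmodule_eq_finsupp_supported (Fin 3) ℂ m
  haveI : FiniteDimensional ℂ (restrictSupport ℂ s) :=
    Module.Finite.of_basis (basisRestrictSupport ℂ s)
  exact Module.Finite.equiv (LinearEquiv.ofEq _ _ heq.symm)

lemma comp_mul_right {q Mi : MvPolynomial (Fin 3) ℂ} (hM : Mi.IsHomogeneous 4) (m n : ℕ)
    (hn : n = m + 4) :
    homogeneousComponent n (q * Mi) = homogeneousComponent m q * Mi := by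
  subst hn
  conv_lhs => rw [← sum_homogeneousComponent q]
  rw [Finset.sum_mul, map_sum]
  have hterm : ∀ j, homogeneousComponent (m + 4) (homogeneousComponent j q * Mi) =
      if j = m then homogeneousComponent j q * Mi else 0 := by
    intro j
    have hmem : homogeneousComponent j q * Mi ∈ homogeneousSubmodule (Fin 3) ℂ (j + 4) :=
      (mem_homogeneousSubmodule _ _).mpr ((homogeneousComponent_isHomogeneous j q).mul hM)
    rw [homogeneousComponent_of_mem hmem]
    by_cases hj : j = m
    · rw [if_pos (by omega), if_pos hj]
    · rw [if_neg (by omega), if_neg hj]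
  rw [Finset.sum_congr rfl (fun j _ => hterm j), Finset.sum_ite_eq' _ m _]
  by_cases hm : m ∈ Finset.range (q.totalDegree + 1)
  · rw [if_pos hm]
  · rw [if_neg hm]
    have : homogeneousComponent m q = 0 := by
      apply homogeneousComponent_eq_zero
      simp only [Finset.mem_range] at hm
      omega
    rw [this, zero_mul]


set_option maxHeartbeats 2000000 in
lemma no_smooth_pencil (F G : MvPolynomial (Fin 3) ℂ) (hF : F.IsHomogeneous 3)
    (hG : G.IsHomogeneous 3)
    (hind : ∀ x : Fin 3 → ℂ, x ≠ 0 → ∀ a b : ℂ,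
      (∀ i, a * eval x (pderiv i F) + b * eval x (pderiv i G) = 0) → a = 0 ∧ b = 0) :
    False := by
  classical
  set v : Fin 3 → MvPolynomial (Fin 3) ℂ := fun i => pderiv i F with hv
  set w : Fin 3 → MvPolynomial (Fin 3) ℂ := fun i => pderiv i G with hw
  have hv2 : ∀ i, (v i).IsHomogeneous 2 := fun i => isHomog_pderiv hF i
  have hw2 : ∀ i, (w i).IsHomogeneous 2 := fun i => isHomog_pderiv hG i
  set M0 : MvPolynomial (Fin 3) ℂ := v 1 * w 2 - v 2 * w 1 with hM0
  set M1 : MvPolynomial (Fin 3) ℂ := v 2 * w 0 - v 0 * w 2 with hM1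
  set M2 : MvPolynomial (Fin 3) ℂ := v 0 * w 1 - v 1 * w 0 with hM2
  have hM0h : M0.IsHomogeneous 4 := ((hv2 1).mul (hw2 2)).sub ((hv2 2).mul (hw2 1))
  have hM1h : M1.IsHomogeneous 4 := ((hv2 2).mul (hw2 0)).sub ((hv2 0).mul (hw2 2))
  have hM2h : M2.IsHomogeneous 4 := ((hv2 0).mul (hw2 1)).sub ((hv2 1).mul (hw2 0))
  have hMnz : ∀ x : Fin 3 → ℂ, x ≠ 0 →
      ¬(eval x M0 = 0 ∧ eval x M1 = 0 ∧ eval x M2 = 0) := by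
    rintro x hx ⟨h0, h1, h2⟩
    rw [hM0, map_sub, map_mul, map_mul] at h0
    rw [hM1, map_sub, map_mul, map_mul] at h1
    rw [hM2, map_sub, map_mul, map_mul] at h2
    obtain ⟨A, B, hab, hdep⟩ := dep_vec (fun i => eval x (v i)) (fun i => eval x (w i)) h0 h1 h2
    exact hab (hind x hx A B hdep)
  -- some data used for nondegeneracy
  set x1 : Fin 3 → ℂ := fun j => if j = 0 then 1 else 0 with hx1def
  have hx1 : x1 ≠ 0 := by
    intro h
    have := congrFun h 0
    simp [hx1def] at this
  have hMne : M0 ≠ 0 ∨ M1 ≠ 0 ∨ M2 ≠ 0 := by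
    by_contra hc
    push_neg at hc
    exact hMnz x1 hx1 ⟨by rw [hc.1]; simp, by rw [hc.2.1]; simp, by rw [hc.2.2]; simp⟩
  have hvne : ∃ i, v i ≠ 0 := by
    by_contra hc
    push_neg at hc
    have h := hind x1 hx1 1 0 (fun i => by
      have hci : (pderiv i) F = 0 := hc i
      rw [hci]
      simp)
    exact one_ne_zero h.1
  -- Nullstellensatz
  set J : Ideal (MvPolynomial (Fin 3) ℂ) := Ideal.span {M0, M1, M2} with hJ
  have hzero : MvPolynomial.zeroLocus ℂ J ⊆ {0} := by
    intro x hxl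
    by_contra hx0
    refine hMnz x (by simpa using hx0) ?_
    refine ⟨?_, ?_, ?_⟩ <;> exact hxl _ (Ideal.subset_span (by simp))
  have hXrad : ∀ i : Fin 3, ∃ k : ℕ, (X i : MvPolynomial (Fin 3) ℂ) ^ k ∈ J := by
    intro i
    have hXmem : (X i : MvPolynomial (Fin 3) ℂ) ∈
        MvPolynomial.vanishingIdeal ℂ (MvPolynomial.zeroLocus ℂ J) := by
      rw [MvPolynomial.mem_vanishingIdeal_iff]
      intro x hx
      have : x = 0 := hzero hx
      rw [this]
      simp
    rw [MvPolynomial.vanishingIdeal_zeroLocus_eq_radical] at hXmem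
    exact hXmem
  obtain ⟨k0, hk0⟩ := hXrad 0
  obtain ⟨k1, hk1⟩ := hXrad 1
  obtain ⟨k2, hk2⟩ := hXrad 2
  set K : ℕ := max (max k0 k1) k2 + 1 with hK
  have hXK : ∀ i : Fin 3, (X i : MvPolynomial (Fin 3) ℂ) ^ K ∈ J := by
    intro i
    fin_cases i
    · rw [show K = (K - k0) + k0 from by omega, pow_add]
      exact Ideal.mul_mem_left _ _ hk0
    · rw [show K = (K - k1) + k1 from by omega, pow_add]
      exact Ideal.mul_mem_left _ _ hk1
    · rw [show K = (K - k2) + k2 from by omega, pow_add]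
      exact Ideal.mul_mem_left _ _ hk2
  set a : ℕ := 3 * K + 2 with ha
  -- the two linear maps
  have hva : ∀ (i : Fin 3) (p : ↥(homogeneousSubmodule (Fin 3) ℂ a)),
      (p : MvPolynomial (Fin 3) ℂ) * v i ∈ homogeneousSubmodule (Fin 3) ℂ (a + 2) :=
    fun i p => (mem_homogeneousSubmodule _ _).mpr (p.2.mul (hv2 i))
  have hwa : ∀ (i : Fin 3) (p : ↥(homogeneousSubmodule (Fin 3) ℂ a)),
      (p : MvPolynomial (Fin 3) ℂ) * w i ∈ homogeneousSubmodule (Fin 3) ℂ (a + 2) :=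
    fun i p => (mem_homogeneousSubmodule _ _).mpr (p.2.mul (hw2 i))
  have hMa : ∀ (Mi : MvPolynomial (Fin 3) ℂ), Mi.IsHomogeneous 4 →
      ∀ (p : ↥(homogeneousSubmodule (Fin 3) ℂ (a + 2))),
      (p : MvPolynomial (Fin 3) ℂ) * Mi ∈ homogeneousSubmodule (Fin 3) ℂ (a + 6) := by
    intro Mi hMi p
    have h := ((mem_homogeneousSubmodule _ _).mp p.2).mul hMi
    rw [show a + 2 + 4 = a + 6 from by omega] at h
    exact (mem_homogeneousSubmodule _ _).mpr h
  let α : (↥(homogeneousSubmodule (Fin 3) ℂ a) × ↥(homogeneousSubmodule (Fin 3) ℂ a)) →ₗ[ℂ]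
      (↥(homogeneousSubmodule (Fin 3) ℂ (a + 2)) × ↥(homogeneousSubmodule (Fin 3) ℂ (a + 2)) ×
        ↥(homogeneousSubmodule (Fin 3) ℂ (a + 2))) :=
    { toFun := fun p =>
        (⟨(p.1 : MvPolynomial (Fin 3) ℂ) * v 0 + (p.2 : MvPolynomial (Fin 3) ℂ) * w 0,
           Submodule.add_mem _ (hva 0 p.1) (hwa 0 p.2)⟩,
         ⟨(p.1 : MvPolynomial (Fin 3) ℂ) * v 1 + (p.2 : MvPolynomial (Fin 3) ℂ) * w 1,
           Submodule.add_mem _ (hva 1 p.1) (hwa 1 p.2)⟩,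
         ⟨(p.1 : MvPolynomial (Fin 3) ℂ) * v 2 + (p.2 : MvPolynomial (Fin 3) ℂ) * w 2,
           Submodule.add_mem _ (hva 2 p.1) (hwa 2 p.2)⟩)
      map_add' := by
        intro p q
        refine Prod.ext ?_ (Prod.ext ?_ ?_) <;>
          · apply Subtype.ext
            simp only [Prod.fst_add, Prod.snd_add, Submodule.coe_add]
            ring
      map_smul' := by
        intro c p
        refine Prod.ext ?_ (Prod.ext ?_ ?_) <;>
          · apply Subtype.ext
            simp only [Prod.smul_fst, Prod.smul_snd, Submodule.coe_smul, RingHom.id_apply,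
              smul_add, smul_mul_assoc] }
  let β : (↥(homogeneousSubmodule (Fin 3) ℂ (a + 2)) × ↥(homogeneousSubmodule (Fin 3) ℂ (a + 2)) ×
      ↥(homogeneousSubmodule (Fin 3) ℂ (a + 2))) →ₗ[ℂ] ↥(homogeneousSubmodule (Fin 3) ℂ (a + 6)) :=
    { toFun := fun u =>
        ⟨(u.1 : MvPolynomial (Fin 3) ℂ) * M0 + (u.2.1 : MvPolynomial (Fin 3) ℂ) * M1 +
            (u.2.2 : MvPolynomial (Fin 3) ℂ) * M2,
          Submodule.add_mem _ (Submodule.add_mem _ (hMa M0 hM0h u.1) (hMa M1 hM1h u.2.1))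
            (hMa M2 hM2h u.2.2)⟩
      map_add' := by
        intro p q
        apply Subtype.ext
        simp only [Prod.fst_add, Prod.snd_add, Submodule.coe_add]
        ring
      map_smul' := by
        intro c p
        apply Subtype.ext
        simp only [Prod.smul_fst, Prod.smul_snd, Submodule.coe_smul, RingHom.id_apply,
          smul_add, smul_mul_assoc] }
  -- β ∘ α = 0
  have hcompose : ∀ p, β (α p) = 0 := by
    intro p
    apply Subtype.ext
    show ((p.1 : MvPolynomial (Fin 3) ℂ) * v 0 + (p.2 : MvPolynomial (Fin 3) ℂ) * w 0) * M0 +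
        ((p.1 : MvPolynomial (Fin 3) ℂ) * v 1 + (p.2 : MvPolynomial (Fin 3) ℂ) * w 1) * M1 +
        ((p.1 : MvPolynomial (Fin 3) ℂ) * v 2 + (p.2 : MvPolynomial (Fin 3) ℂ) * w 2) * M2 = 0
    rw [hM0, hM1, hM2]
    ring
  -- α is injective
  have hkerα : LinearMap.ker α = ⊥ := by
    rw [LinearMap.ker_eq_bot']
    intro p hp
    have h0 : (p.1 : MvPolynomial (Fin 3) ℂ) * v 0 + (p.2 : MvPolynomial (Fin 3) ℂ) * w 0 = 0 := by
      have h := congrArg Prod.fst hp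
      rw [Prod.fst_zero] at h
      have h' := Subtype.ext_iff.mp h
      rw [ZeroMemClass.coe_zero] at h'
      exact h'
    have h1 : (p.1 : MvPolynomial (Fin 3) ℂ) * v 1 + (p.2 : MvPolynomial (Fin 3) ℂ) * w 1 = 0 := by
      have h := congrArg (fun z => z.2.1) hp
      simp only [Prod.snd_zero, Prod.fst_zero] at h
      have h' := Subtype.ext_iff.mp h
      rw [ZeroMemClass.coe_zero] at h'
      exact h'
    have h2 : (p.1 : MvPolynomial (Fin 3) ℂ) * v 2 + (p.2 : MvPolynomial (Fin 3) ℂ) * w 2 = 0 := by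
      have h := congrArg (fun z => z.2.2) hp
      simp only [Prod.snd_zero] at h
      have h' := Subtype.ext_iff.mp h
      rw [ZeroMemClass.coe_zero] at h'
      exact h'
    have hb0 : (p.2 : MvPolynomial (Fin 3) ℂ) * M0 = 0 := by
      rw [hM0]; linear_combination (v 1) * h2 - (v 2) * h1
    have hb1 : (p.2 : MvPolynomial (Fin 3) ℂ) * M1 = 0 := by
      rw [hM1]; linear_combination (v 2) * h0 - (v 0) * h2
    have hb2 : (p.2 : MvPolynomial (Fin 3) ℂ) * M2 = 0 := by
      rw [hM2]; linear_combination (v 0) * h1 - (v 1) * h0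
    have hp2 : (p.2 : MvPolynomial (Fin 3) ℂ) = 0 := by
      rcases hMne with hM | hM | hM
      · rcases mul_eq_zero.mp hb0 with h | h
        · exact h
        · exact absurd h hM
      · rcases mul_eq_zero.mp hb1 with h | h
        · exact h
        · exact absurd h hM
      · rcases mul_eq_zero.mp hb2 with h | h
        · exact h
        · exact absurd h hM
    have hp1 : (p.1 : MvPolynomial (Fin 3) ℂ) = 0 := by
      obtain ⟨i, hvi⟩ := hvne
      have hi : (p.1 : MvPolynomial (Fin 3) ℂ) * v i = 0 := by
        fin_cases i <;>
          simp only [Fin.zero_eta, Fin.mk_one, Fin.reduceFinMk, Fin.isValue]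
        · linear_combination h0 - (w 0) * hp2
        · linear_combination h1 - (w 1) * hp2
        · linear_combination h2 - (w 2) * hp2
      rcases mul_eq_zero.mp hi with h | h
      · exact h
      · exact absurd h hvi
    refine Prod.ext (Subtype.ext ?_) (Subtype.ext ?_) <;> simpa [hp1, hp2]
  -- β is surjective
  have hmono : ∀ d : Fin 3 →₀ ℕ, d.degree = a + 6 → ∀ c : ℂ,
      ∃ u0 u1 u2 : MvPolynomial (Fin 3) ℂ, u0.IsHomogeneous (a + 2) ∧
        u1.IsHomogeneous (a + 2) ∧ u2.IsHomogeneous (a + 2) ∧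
        u0 * M0 + u1 * M1 + u2 * M2 = monomial d c := by
    intro d hd c
    have hsum : d 0 + d 1 + d 2 = a + 6 := by rw [← deg3]; exact hd
    obtain ⟨i0, hKle⟩ : ∃ i0 : Fin 3, K ≤ d i0 := by
      rcases (by omega : K ≤ d 0 ∨ K ≤ d 1 ∨ K ≤ d 2) with h | h | h
      exacts [⟨0, h⟩, ⟨1, h⟩, ⟨2, h⟩]
    obtain ⟨u0', u1', u2', hrep⟩ : ∃ u0' u1' u2' : MvPolynomial (Fin 3) ℂ,
        (X i0 : MvPolynomial (Fin 3) ℂ) ^ K = u0' * M0 + u1' * M1 + u2' * M2 := by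
      have h := hXK i0
      rw [hJ, show ({M0, M1, M2} : Set (MvPolynomial (Fin 3) ℂ)) = insert M0 {M1, M2} from rfl,
        Ideal.mem_span_insert] at h
      obtain ⟨y0, z0, hz0, hXrep⟩ := h
      rw [show ({M1, M2} : Set (MvPolynomial (Fin 3) ℂ)) = insert M1 {M2} from rfl,
        Ideal.mem_span_insert] at hz0
      obtain ⟨y1, z1, hz1, hzrep⟩ := hz0
      rw [Ideal.mem_span_singleton] at hz1
      obtain ⟨y2, rfl⟩ := hz1
      exact ⟨y0, y1, y2, by rw [hXrep, hzrep]; ring⟩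
    set r : MvPolynomial (Fin 3) ℂ := monomial (d - Finsupp.single i0 K) c with hr
    have hexp : d - Finsupp.single i0 K + Finsupp.single i0 K = d := by
      ext j
      simp only [Finsupp.coe_add, Pi.add_apply, Finsupp.tsub_apply, Finsupp.single_apply]
      by_cases hji : i0 = j
      · subst hji
        simp only [eq_self_iff_true, if_true]
        omega
      · simp [hji]
    have hmonoeq : (monomial d c : MvPolynomial (Fin 3) ℂ) = r * (X i0) ^ K := by
      rw [hr, X_pow_eq_monomial, monomial_mul, mul_one, hexp]
    have hfull : (monomial d c : MvPolynomial (Fin 3) ℂ) =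
        (r * u0') * M0 + (r * u1') * M1 + (r * u2') * M2 := by
      rw [hmonoeq, hrep]
      ring
    have hcomp := congrArg (fun z => homogeneousComponent (a + 6) z) hfull
    simp only [map_add] at hcomp
    rw [homogeneousComponent_of_mem ((mem_homogeneousSubmodule _ _).mpr
      (isHomogeneous_monomial c hd)), if_pos rfl] at hcomp
    rw [comp_mul_right hM0h (a + 2) (a + 6) (by omega),
      comp_mul_right hM1h (a + 2) (a + 6) (by omega),
      comp_mul_right hM2h (a + 2) (a + 6) (by omega)] at hcomp
    exact ⟨homogeneousComponent (a + 2) (r * u0'), homogeneousComponent (a + 2) (r * u1'),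
      homogeneousComponent (a + 2) (r * u2'),
      homogeneousComponent_isHomogeneous _ _, homogeneousComponent_isHomogeneous _ _,
      homogeneousComponent_isHomogeneous _ _, hcomp.symm⟩
  have hrangeβ : LinearMap.range β = ⊤ := by
    rw [eq_top_iff]
    rintro y -
    set W : Submodule ℂ (MvPolynomial (Fin 3) ℂ) :=
      Submodule.map (homogeneousSubmodule (Fin 3) ℂ (a + 6)).subtype (LinearMap.range β) with hW
    have hWy : (y : MvPolynomial (Fin 3) ℂ) ∈ W := by
      have hysum : (y : MvPolynomial (Fin 3) ℂ) =
          ∑ d ∈ (y : MvPolynomial (Fin 3) ℂ).support,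
            monomial d (coeff d (y : MvPolynomial (Fin 3) ℂ)) := (y : MvPolynomial (Fin 3) ℂ).as_sum
      rw [hysum]
      apply Submodule.sum_mem
      intro d hdsupp
      have hdeg : d.degree = a + 6 := by
        rw [deg3]
        exact homog_coeff_deg y.2 (mem_support_iff.mp hdsupp)
      obtain ⟨u0, u1, u2, hu0, hu1, hu2, heq⟩ := hmono d hdeg _
      refine ⟨β ⟨⟨u0, (mem_homogeneousSubmodule _ _).mpr hu0⟩,
        ⟨u1, (mem_homogeneousSubmodule _ _).mpr hu1⟩,
        ⟨u2, (mem_homogeneousSubmodule _ _).mpr hu2⟩⟩, ⟨_, rfl⟩, ?_⟩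
      exact heq
    obtain ⟨z, hz, hzy⟩ := hWy
    have : z = y := Subtype.ext hzy
    rw [← this]
    exact hz
  -- dimension count
  have hrange_le : LinearMap.range α ≤ LinearMap.ker β := by
    rintro _ ⟨p, rfl⟩
    exact LinearMap.mem_ker.mpr (hcompose p)
  have hrnα := LinearMap.finrank_range_add_finrank_ker α
  have hrnβ := LinearMap.finrank_range_add_finrank_ker β
  rw [hkerα, finrank_bot] at hrnα
  rw [hrangeβ, finrank_top] at hrnβ
  have hle := Submodule.finrank_mono hrange_le
  set n1 := Module.finrank ℂ (homogeneousSubmodule (Fin 3) ℂ a) with hn1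
  set n2 := Module.finrank ℂ (homogeneousSubmodule (Fin 3) ℂ (a + 2)) with hn2
  set n3 := Module.finrank ℂ (homogeneousSubmodule (Fin 3) ℂ (a + 6)) with hn3
  have hdom : Module.finrank ℂ (↥(homogeneousSubmodule (Fin 3) ℂ a) ×
      ↥(homogeneousSubmodule (Fin 3) ℂ a)) = n1 + n1 := by
    rw [Module.finrank_prod]
  have hcod : Module.finrank ℂ (↥(homogeneousSubmodule (Fin 3) ℂ (a + 2)) ×
      ↥(homogeneousSubmodule (Fin 3) ℂ (a + 2)) × ↥(homogeneousSubmodule (Fin 3) ℂ (a + 2))) =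
      n2 + (n2 + n2) := by
    rw [Module.finrank_prod, Module.finrank_prod]
  rw [hdom] at hrnα
  rw [hcod] at hrnβ
  -- hrnα : finrank range α + 0 = n1 + n1
  -- hle : finrank range α ≤ finrank ker β
  -- hrnβ : n3 + finrank ker β = n2 + (n2 + n2)
  have e1 : 2 * n1 = (3 * K + 3) * (3 * K + 4) :=
    (finrank_homog a).trans (by rw [ha])
  have e2 : 2 * n2 = (3 * K + 5) * (3 * K + 6) :=
    (finrank_homog (a + 2)).trans (by rw [ha])
  have e3 : 2 * n3 = (3 * K + 9) * (3 * K + 10) :=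
    (finrank_homog (a + 6)).trans (by rw [ha])
  have ekey : 2 * ((3 * K + 3) * (3 * K + 4)) + ((3 * K + 9) * (3 * K + 10)) =
      3 * ((3 * K + 5) * (3 * K + 6)) + 24 := by ring
  set P1 := (3 * K + 3) * (3 * K + 4)
  set P2' := (3 * K + 5) * (3 * K + 6)
  set P3 := (3 * K + 9) * (3 * K + 10)
  omega


lemma exists_pencil (Ppts : Fin 8 → P2) :
    ∃ F G : MvPolynomial (Fin 3) ℂ, F.IsHomogeneous 3 ∧ G.IsHomogeneous 3 ∧
      (∀ i, eval (Ppts i).rep F = 0) ∧ (∀ i, eval (Ppts i).rep G = 0) ∧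
      (∀ a b : ℂ, a • F + b • G = 0 → a = 0 ∧ b = 0) := by
  classical
  have hN3 : Module.finrank ℂ (homogeneousSubmodule (Fin 3) ℂ 3) = 10 := by
    have h := finrank_homog 3
    omega
  set ψ : ↥(homogeneousSubmodule (Fin 3) ℂ 3) →ₗ[ℂ] (Fin 8 → ℂ) :=
    { toFun := fun p => fun i => eval (Ppts i).rep (p : MvPolynomial (Fin 3) ℂ)
      map_add' := by
        intro p q
        funext i
        simp [Submodule.coe_add]
      map_smul' := by
        intro c p
        funext i
        simp [Submodule.coe_smul, MvPolynomial.smul_eval] } with hψ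
  have hrank := LinearMap.finrank_range_add_finrank_ker ψ
  rw [hN3] at hrank
  have hrle : Module.finrank ℂ (LinearMap.range ψ) ≤ 8 := by
    have h := Submodule.finrank_le (LinearMap.range ψ)
    rwa [Module.finrank_fin_fun] at h
  have hker2 : 2 ≤ Module.finrank ℂ (LinearMap.ker ψ) := by omega
  haveI hnt : Nontrivial ↥(LinearMap.ker ψ) := by
    rw [← Module.finrank_pos_iff (R := ℂ)]
    omega
  obtain ⟨x, hxne⟩ := exists_ne (0 : ↥(LinearMap.ker ψ))
  set F' : ↥(homogeneousSubmodule (Fin 3) ℂ 3) := (x : ↥(homogeneousSubmodule (Fin 3) ℂ 3))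
    with hF'
  have hF'ne : F' ≠ 0 := by
    intro h
    exact hxne (Subtype.ext h)
  have hF'mem : F' ∈ LinearMap.ker ψ := x.2
  have hspan_le : Submodule.span ℂ {F'} ≤ LinearMap.ker ψ := by
    rw [Submodule.span_le, Set.singleton_subset_iff]
    exact hF'mem
  have hspan_lt : Submodule.span ℂ {F'} < LinearMap.ker ψ := by
    refine lt_of_le_of_ne hspan_le ?_
    intro h
    have h1 : Module.finrank ℂ (Submodule.span ℂ ({F'} : Set _)) = 1 :=
      finrank_span_singleton hF'ne
    rw [h] at h1
    omega
  obtain ⟨G', hG'ker, hG'span⟩ := SetLike.exists_of_lt hspan_lt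
  refine ⟨(F' : MvPolynomial (Fin 3) ℂ), (G' : MvPolynomial (Fin 3) ℂ),
    (mem_homogeneousSubmodule _ _).mp F'.2, (mem_homogeneousSubmodule _ _).mp G'.2, ?_, ?_, ?_⟩
  · intro i
    exact congrFun (LinearMap.mem_ker.mp hF'mem) i
  · intro i
    exact congrFun (LinearMap.mem_ker.mp hG'ker) i
  · intro a b hab
    have hab' : a • F' + b • G' = 0 := by
      apply Subtype.ext
      simp only [Submodule.coe_add, Submodule.coe_smul, ZeroMemClass.coe_zero]
      exact hab
    by_cases hb : b = 0
    · subst hb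
      rw [zero_smul, add_zero] at hab'
      rcases smul_eq_zero.mp hab' with h | h
      · exact ⟨h, rfl⟩
      · exact absurd h hF'ne
    · exfalso
      apply hG'span
      rw [Submodule.mem_span_singleton]
      refine ⟨-(a / b), ?_⟩
      have h1 : b • G' = -(a • F') := eq_neg_of_add_eq_zero_right hab'
      have h2 : G' = b⁻¹ • (b • G') := (inv_smul_smul₀ hb G').symm
      rw [h1] at h2
      rw [h2, smul_neg, smul_smul, ← neg_smul]
      congr 1
      rw [div_eq_inv_mul]


end AuxSing

/-- for eight distinct points in `ℙ²(ℂ)` with no three collinear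
and no six on a conic: (a) every nonzero homogeneous cubic vanishing at all
eight points is irreducible, and (b) there exists a nonzero homogeneous cubic
vanishing at all eight points which is singular at some point of `ℙ²(ℂ)`. -/
theorem singular_cubic_through_eight_points (Ppts : Fin 8 → P2)
    (hinj : Function.Injective Ppts) (hgen : noThreeCollinear Ppts)
    (hconic : noSixOnConic Ppts) :
    (∀ F : MvPolynomial (Fin 3) ℂ, F ≠ 0 → F.IsHomogeneous 3 →
      (∀ i, eval (Ppts i).rep F = 0) → Irreducible F) ∧
    (∃ F : MvPolynomial (Fin 3) ℂ, F ≠ 0 ∧ F.IsHomogeneous 3 ∧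
      (∀ i, eval (Ppts i).rep F = 0) ∧ ∃ Q : P2, 2 ≤ multP F Q) := by
  constructor
  · intro F hF0 hF3 hvan
    exact AuxSing.part_a hgen hconic hF0 hF3 hvan
  · obtain ⟨F, G, hF3, hG3, hFv, hGv, hind⟩ := AuxSing.exists_pencil Ppts
    by_cases hdep : ∃ x : Fin 3 → ℂ, x ≠ 0 ∧ ∃ a b : ℂ, ¬(a = 0 ∧ b = 0) ∧
        ∀ i : Fin 3, a * eval x (pderiv i F) + b * eval x (pderiv i G) = 0
    · obtain ⟨x, hx, aa, bb, hab, hd⟩ := hdep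
      set H : MvPolynomial (Fin 3) ℂ := C aa * F + C bb * G with hH
      have hH3 : H.IsHomogeneous 3 := (hF3.C_mul aa).add (hG3.C_mul bb)
      have hHne : H ≠ 0 := by
        intro h
        apply hab
        apply hind aa bb
        rw [smul_eq_C_mul, smul_eq_C_mul, ← hH]
        exact h
      have hHvan : ∀ i, eval (Ppts i).rep H = 0 := by
        intro i
        rw [hH, map_add, map_mul, map_mul, eval_C, eval_C, hFv i, hGv i]
        ring
      have hDer : ∀ i : Fin 3, eval x (pderiv i H) = 0 := by
        intro i
        rw [hH, map_add, pderiv_C_mul, pderiv_C_mul, map_add, map_mul, map_mul, eval_C, eval_C]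
        linear_combination hd i
      have hval : eval x H = 0 := by
        have he := AuxSing.euler_eval hH3 x
        rw [hDer 0, hDer 1, hDer 2] at he
        simp only [mul_zero, add_zero] at he
        rcases mul_eq_zero.mp he with h | h
        · exact absurd h (by norm_num)
        · exact h
      exact ⟨H, hHne, hH3, hHvan, Projectivization.mk ℂ x hx,
        AuxSing.two_le_multP hH3 hHne hx hval hDer⟩
    · push_neg at hdep
      exact (AuxSing.no_smooth_pencil F G hF3 hG3 (fun x hx a b hsys => by
        by_contra hc
        obtain ⟨i, hne⟩ := hdep x hx a b (fun ha hb => hc ⟨ha, hb⟩)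
        exact hne (hsys i))).elim
end
end
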